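/- arXiv:1105.1151 — 9 statements merged into one kernel-verified Lean document; each statement's English description precedes it below -/
import Mathlib

section
/- For coprime positive integers p and q, the map (x,y) ↦ pq − qx − py is a bijection from the set of boxes of R_+^{p,q} (that is, pairs of integers (x,y) with x ≥ 1, y ≥ 1 and qx + py < pq) onto the set ℕ \ Γ^{p,q} of nonnegative integers not belonging to the semigroup Γ^{p,q}; in particular, |ℕ \ Γ^{p,q}| = (p−1)(q−1)/2 and |R_+^{p,q}| = (p−1)(q−1)/2. -/
/-!
The label of a box of `R_+^{p,q}` is not in `Γ^{p,q}`: `pq - qx - py = ap + bq` would write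
`pq = (a + y) p + (b + x) q` with positive coefficients, which coprimality forbids. Labels
determine boxes since `x < p` is fixed by `qx ≡ pq - label (mod p)`. Conversely, for
`n ∉ Γ^{p,q}` solve `qb ≡ n (mod p)` with `b < p`; then `qb > n`, and `(p - b, (qb - n)/p)` is a
box with label `n`. Finally, `(x, y) ↦ (p - x, q - y)` permutes the `(p-1)(q-1)` boxes with
`x < p`, `y < q` and changes the sign of their labels, which are never `0`, so exactly half of
them lie in `R_+^{p,q}`.
-/

/-- The numerical semigroup `Γ^{p,q} = {ap + bq : a, b ∈ ℕ}`. -/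
def Gamma (p q : ℕ) : Set ℕ := {n | ∃ a b : ℕ, n = a * p + b * q}

/-- A `0`-normalized `Γ^{p,q}`-semi-module: `0 ∈ Δ` and `Δ + Γ^{p,q} ⊆ Δ`. -/
def IsSemiModule (p q : ℕ) (Δ : Set ℕ) : Prop :=
  0 ∈ Δ ∧ ∀ x ∈ Δ, ∀ g ∈ Gamma p q, x + g ∈ Δ

/-- Boxes of the `p × q` rectangle `R^{p,q}`: pairs `(x,y)` with `1 ≤ x ≤ p`, `1 ≤ y ≤ q`. -/
def Rbox (p q : ℕ) : Set (ℕ × ℕ) :=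
  {c | 1 ≤ c.1 ∧ c.1 ≤ p ∧ 1 ≤ c.2 ∧ c.2 ≤ q}

/-- Boxes of `R_+^{p,q}`: boxes with positive label, i.e. `qx + py < pq`. -/
def Rplus (p q : ℕ) : Set (ℕ × ℕ) :=
  {c | 1 ≤ c.1 ∧ 1 ≤ c.2 ∧ q * c.1 + p * c.2 < p * q}

/-- The label `f(x,y) = pq - qx - py` of a box. -/
def boxLabel (p q : ℕ) (c : ℕ × ℕ) : ℕ := p * q - (q * c.1 + p * c.2)

open Finset

lemma lt_of_mem_Rplus {p q : ℕ} {c : ℕ × ℕ} (hc : c ∈ Rplus p q) : c.1 < p ∧ c.2 < q := by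
  obtain ⟨hx, hy, hlt⟩ := hc
  constructor <;> by_contra! h
  · nlinarith [Nat.mul_le_mul_left q h]
  · nlinarith [Nat.mul_le_mul_left p h]

lemma boxLabel_notMem_Gamma {p q : ℕ} (hpq : p.Coprime q) {c : ℕ × ℕ} (hc : c ∈ Rplus p q) :
    boxLabel p q c ∉ Gamma p q := by
  obtain ⟨hx, hy, hlt⟩ := hc
  rintro ⟨a, b, hab⟩
  have hsub := Nat.sub_add_cancel hlt.le
  unfold boxLabel at hab
  apply hpq.mul_add_mul_ne_mul (a := a + c.2) (b := b + c.1) (by omega) (by omega)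
  linarith

lemma injOn_boxLabel {p q : ℕ} (hpq : p.Coprime q) : Set.InjOn (boxLabel p q) (Rplus p q) := by
  rintro ⟨x₁, y₁⟩ h₁ ⟨x₂, y₂⟩ h₂ heq
  obtain ⟨hx₁, hy₁⟩ := lt_of_mem_Rplus h₁
  obtain ⟨hx₂, -⟩ := lt_of_mem_Rplus h₂
  obtain ⟨-, -, hlt₁⟩ := h₁
  obtain ⟨-, -, hlt₂⟩ := h₂
  simp only [boxLabel] at heq hx₁ hy₁ hx₂ hlt₁ hlt₂
  have hsum : q * x₁ + p * y₁ = q * x₂ + p * y₂ := by omega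
  have hmod : q * x₁ ≡ q * x₂ [MOD p] := by
    simpa only [Nat.ModEq, Nat.add_mul_mod_self_left] using congrArg (· % p) hsum
  have hx : x₁ = x₂ := Nat.ModEq.eq_of_lt_of_lt (hmod.cancel_left_of_coprime hpq) hx₁ hx₂
  subst hx
  have hy : y₁ = y₂ := Nat.eq_of_mul_eq_mul_left (by omega) (by omega : p * y₁ = p * y₂)
  rw [hy]

lemma surjOn_boxLabel {p q : ℕ} (hp : 0 < p) (hpq : p.Coprime q) :
    Set.SurjOn (boxLabel p q) (Rplus p q) (Gamma p q)ᶜ := by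
  intro n hn
  obtain ⟨b, hbp, hbn⟩ := Nat.exists_mul_mod_eq_of_coprime n hpq.symm hp.ne'
  have hn0 : n ≠ 0 := by
    rintro rfl
    exact hn ⟨0, 0, by simp⟩
  have hnb : n < q * b := by
    by_contra! hle
    obtain ⟨a, ha⟩ := (Nat.modEq_iff_dvd' hle).mp hbn
    exact hn ⟨a, b, by rw [mul_comm a p, mul_comm b q]; omega⟩
  obtain ⟨m, hm⟩ := (Nat.modEq_iff_dvd' hnb.le).mp hbn.symm
  have hqpb : q * (p - b) + q * b = p * q := by
    rw [← Nat.mul_add, Nat.sub_add_cancel hbp.le, mul_comm]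
  have hm0 : m ≠ 0 := by
    rintro rfl
    omega
  refine ⟨(p - b, m), ⟨?_, ?_, ?_⟩, ?_⟩ <;> simp only [boxLabel] <;> omega

lemma Rplus_eq_filter (p q : ℕ) :
    Rplus p q = ↑({c ∈ Ico 1 p ×ˢ Ico 1 q | q * c.1 + p * c.2 < p * q}) := by
  ext c
  have := @lt_of_mem_Rplus p q c
  simp only [Rplus, Set.mem_ofPred_eq, coe_filter, mem_product, mem_Ico] at *
  tauto

lemma card_filter_lt_eq_card_filter_gt (p q : ℕ) :
    #{c ∈ Ico 1 p ×ˢ Ico 1 q | q * c.1 + p * c.2 < p * q} =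
      #{c ∈ Ico 1 p ×ˢ Ico 1 q | p * q < q * c.1 + p * c.2} := by
  have hrefl {x y : ℕ} (hx : x ≤ p) (hy : y ≤ q) :
      q * (p - x) + p * (q - y) + (q * x + p * y) = 2 * (p * q) := by
    zify [hx, hy]
    ring
  apply card_nbij' (fun c => (p - c.1, q - c.2)) (fun c => (p - c.1, q - c.2)) <;>
    rintro ⟨x, y⟩ <;>
    simp only [coe_filter, mem_product, mem_Ico, Set.mem_ofPred_eq,
      Prod.mk.injEq] <;>
    rintro ⟨⟨⟨hx₁, hx₂⟩, hy₁, hy₂⟩, h⟩ <;>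
    have := hrefl hx₂.le hy₂.le <;>
    omega

lemma two_mul_ncard_Rplus {p q : ℕ} (hpq : p.Coprime q) :
    2 * (Rplus p q).ncard = (p - 1) * (q - 1) := by
  have hne : ∀ c ∈ Ico 1 p ×ˢ Ico 1 q, q * c.1 + p * c.2 ≠ p * q := by
    simp only [mem_product, mem_Ico]
    rintro ⟨x, y⟩ ⟨⟨hx, -⟩, hy, -⟩
    have := hpq.mul_add_mul_ne_mul (by omega : y ≠ 0) (by omega : x ≠ 0)
    rwa [add_comm, mul_comm y, mul_comm x] at this
  have hgt : #{c ∈ Ico 1 p ×ˢ Ico 1 q | p * q < q * c.1 + p * c.2} =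
      #{c ∈ Ico 1 p ×ˢ Ico 1 q | ¬ q * c.1 + p * c.2 < p * q} := by
    congr 1
    refine filter_congr fun c hc => ?_
    have := hne c hc
    omega
  rw [Rplus_eq_filter, Set.ncard_coe_finset, two_mul]
  nth_rw 2 [card_filter_lt_eq_card_filter_gt]
  rw [hgt, card_filter_add_card_filter_not, card_product, Nat.card_Ico, Nat.card_Ico]

theorem stmt_0_general (p q : ℕ) (hp : 0 < p) (hpq : Nat.Coprime p q) :
    Set.BijOn (boxLabel p q) (Rplus p q) ((Gamma p q)ᶜ) ∧
    ((Gamma p q)ᶜ).ncard = (p - 1) * (q - 1) / 2 ∧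
    (Rplus p q).ncard = (p - 1) * (q - 1) / 2 := by
  have hbij : Set.BijOn (boxLabel p q) (Rplus p q) (Gamma p q)ᶜ :=
    ⟨fun _ hc => boxLabel_notMem_Gamma hpq hc, injOn_boxLabel hpq, surjOn_boxLabel hp hpq⟩
  have hcard : (Rplus p q).ncard = (p - 1) * (q - 1) / 2 := by
    have := two_mul_ncard_Rplus hpq
    omega
  refine ⟨hbij, ?_, hcard⟩
  rw [← hbij.image_eq, hbij.injOn.ncard_image, hcard]

/-- for coprime positive `p, q`, the label map `(x,y) ↦ pq - qx - py` is a
bijection from `R_+^{p,q}` onto `ℕ \ Γ^{p,q}`; in particular both sets have cardinality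
`(p-1)(q-1)/2`. -/
theorem stmt_0 (p q : ℕ) (hp : 0 < p) (hq : 0 < q) (hpq : Nat.Coprime p q) :
    Set.BijOn (boxLabel p q) (Rplus p q) ((Gamma p q)ᶜ) ∧
    ((Gamma p q)ᶜ).ncard = (p - 1) * (q - 1) / 2 ∧
    (Rplus p q).ncard = (p - 1) * (q - 1) / 2 :=
  stmt_0_general p q hp hpq
end

section
/- Let p and q be coprime positive integers and Δ a 0-normalized Γ^{p,q}-semi-module. For every integer a, the number of q-cogenerators of Δ that are greater than or equal to a equals |[a, a+q) \ Δ|, the number of integers x with a ≤ x < a+q and x ∉ Δ. -/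
/-- `Δ ⊆ ℕ` viewed as a subset of `ℤ`. -/
def deltaZ (Δ : Set ℕ) : Set ℤ := {z | ∃ m ∈ Δ, (m : ℤ) = z}

/-- The `q`-cogenerators of `Δ`: integers `y` with `y ∉ Δ` and `y + q ∈ Δ`. -/
def qCogen (q : ℕ) (Δ : Set ℕ) : Set ℤ := {y | y ∉ deltaZ Δ ∧ y + (q : ℤ) ∈ deltaZ Δ}

open Set

/-- Bezout: `x = x u p + x v q`; shifting by a large multiple of `p q` makes both coefficients
nonnegative. -/
theorem exists_natCast_mul_eq_add_natCast_mul {p q : ℕ} (hp : 0 < p) (hq : 0 < q)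
    (hpq : p.Coprime q) (x : ℤ) : ∃ m k : ℕ, (m * p : ℤ) = x + k * q := by
  obtain ⟨u, v, huv⟩ := Nat.isCoprime_iff_coprime.2 hpq
  have hp1 : (1 : ℤ) ≤ p := by exact_mod_cast hp
  have hq1 : (1 : ℤ) ≤ q := by exact_mod_cast hq
  set t := |x * u| + |x * v|
  have ht : 0 ≤ t := by positivity
  have hm : 0 ≤ x * u + t * q := by
    nlinarith [neg_abs_le (x * u), abs_nonneg (x * v), mul_nonneg ht (sub_nonneg.2 hq1)]
  have hk : 0 ≤ t * p - x * v := by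
    nlinarith [le_abs_self (x * v), abs_nonneg (x * u), mul_nonneg ht (sub_nonneg.2 hp1)]
  refine ⟨(x * u + t * q).toNat, (t * p - x * v).toNat, ?_⟩
  rw [Int.toNat_of_nonneg hm, Int.toNat_of_nonneg hk]
  linear_combination x * huv

def Cogenerators (q : ℤ) (D : Set ℤ) : Set ℤ := {y | y ∉ D ∧ y + q ∈ D}

section Cogenerators

variable {q : ℤ} {D : Set ℤ}

theorem add_natCast_mul_mem (hD : ∀ z ∈ D, z + q ∈ D) {z : ℤ} (hz : z ∈ D) (k : ℕ) :
    z + k * q ∈ D := by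
  induction k with
  | zero => simpa using hz
  | succ k ih => simpa [add_mul, ← add_assoc] using hD _ ih

theorem Cogenerators.eq_of_sub_eq_zsmul (hD : ∀ z ∈ D, z + q ∈ D) {y₁ y₂ : ℤ}
    (h₁ : y₁ ∈ Cogenerators q D) (h₂ : y₂ ∈ Cogenerators q D) {n : ℤ} (hn : y₂ - y₁ = n • q) :
    y₁ = y₂ := by
  wlog hn₀ : 0 ≤ n generalizing y₁ y₂ n
  · exact (this h₂ h₁ (n := -n) (by rw [neg_smul, ← hn, neg_sub]) (by omega)).symm
  obtain ⟨_ | k, rfl⟩ := Int.eq_ofNat_of_zero_le hn₀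
  · simp only [Nat.cast_zero, zero_smul, sub_eq_zero] at hn
    exact hn.symm
  · refine absurd ?_ h₂.1
    have hy₂ : y₂ = y₁ + q + k * q := by
      rw [sub_eq_iff_eq_add'.1 hn, smul_eq_mul]; push_cast; ring
    exact hy₂ ▸ add_natCast_mul_mem hD h₁.2 k

theorem toIcoMod_notMem_of_mem_cogenerators (hq : 0 < q) (hD : ∀ z ∈ D, z + q ∈ D) {a y : ℤ}
    (hy : y ∈ Cogenerators q D) (hay : a ≤ y) : toIcoMod hq a y ∉ D := by
  have hdiv : 0 ≤ toIcoDiv hq a y := by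
    have hy_eq := toIcoMod_add_toIcoDiv_zsmul hq a y
    have hlt := (toIcoMod_mem_Ico hq a y).2
    rw [smul_eq_mul] at hy_eq
    nlinarith
  obtain ⟨n, hn⟩ := Int.eq_ofNat_of_zero_le hdiv
  intro hmem
  apply hy.1
  rw [← toIcoMod_add_toIcoDiv_zsmul hq a y, hn, smul_eq_mul]
  exact add_natCast_mul_mem hD hmem n

theorem exists_add_natCast_mul_mem_cogenerators {x : ℤ} (hx : x ∉ D)
    (h : ∃ k : ℕ, x + k * q ∈ D) : ∃ k : ℕ, x + k * q ∈ Cogenerators q D := by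
  classical
  obtain ⟨k, hk⟩ : ∃ k, Nat.find h = k + 1 :=
    Nat.exists_eq_succ_of_ne_zero fun h₀ => hx (by simpa [h₀] using Nat.find_spec h)
  refine ⟨k, Nat.find_min h (by omega), ?_⟩
  have hmem := Nat.find_spec h
  rw [hk] at hmem
  convert hmem using 1
  push_cast
  ring

theorem ncard_cogenerators_ge (hq : 0 < q) (hD : ∀ z ∈ D, z + q ∈ D)
    (hfill : ∀ x, ∃ k : ℕ, x + k * q ∈ D) (a : ℤ) :
    {y | y ∈ Cogenerators q D ∧ a ≤ y}.ncard = (Ico a (a + q) \ D).ncard := by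
  have hinj : InjOn (toIcoMod hq a) {y | y ∈ Cogenerators q D ∧ a ≤ y} :=
    fun y₁ h₁ y₂ h₂ h =>
      have ⟨_, hn⟩ := (toIcoMod_eq_toIcoMod hq).1 h
      Cogenerators.eq_of_sub_eq_zsmul hD h₁.1 h₂.1 hn
  have himage : toIcoMod hq a '' {y | y ∈ Cogenerators q D ∧ a ≤ y} = Ico a (a + q) \ D := by
    ext x
    constructor
    · rintro ⟨y, ⟨hy, hay⟩, rfl⟩
      exact ⟨toIcoMod_mem_Ico hq a y, toIcoMod_notMem_of_mem_cogenerators hq hD hy hay⟩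
    · rintro ⟨hx, hxD⟩
      obtain ⟨k, hk⟩ := exists_add_natCast_mul_mem_cogenerators hxD (hfill x)
      refine ⟨x + k * q, ⟨hk, by nlinarith [hx.1]⟩, ?_⟩
      rw [← smul_eq_mul, toIcoMod_add_zsmul, toIcoMod_eq_self]
      exact hx
  rw [← himage, hinj.ncard_image]

end Cogenerators

namespace IsSemiModule

variable {p q : ℕ} {Δ : Set ℕ}

theorem gamma_subset (hΔ : IsSemiModule p q Δ) : Gamma p q ⊆ Δ :=
  fun g hg => by simpa using hΔ.2 0 hΔ.1 g hg

theorem add_mem_deltaZ (hΔ : IsSemiModule p q Δ) {z : ℤ} (hz : z ∈ deltaZ Δ) :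
    z + q ∈ deltaZ Δ := by
  obtain ⟨m, hm, rfl⟩ := hz
  exact ⟨m + q, hΔ.2 m hm q ⟨0, 1, by ring⟩, by push_cast; rfl⟩

theorem exists_add_natCast_mul_mem_deltaZ (hΔ : IsSemiModule p q Δ) (hp : 0 < p) (hq : 0 < q)
    (hpq : p.Coprime q) (x : ℤ) : ∃ k : ℕ, x + k * q ∈ deltaZ Δ := by
  obtain ⟨m, k, h⟩ := exists_natCast_mul_eq_add_natCast_mul hp hq hpq x
  exact ⟨k, m * p, hΔ.gamma_subset ⟨m, 0, by ring⟩, by push_cast; exact h⟩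

end IsSemiModule

/-- for every integer `a`, the number of `q`-cogenerators of `Δ` that are
`≥ a` equals `|[a, a+q) \ Δ|`. -/
theorem stmt_3 (p q : ℕ) (hp : 0 < p) (hq : 0 < q) (hpq : Nat.Coprime p q)
    (Δ : Set ℕ) (hΔ : IsSemiModule p q Δ) (a : ℤ) :
    {y | y ∈ qCogen q Δ ∧ a ≤ y}.ncard = (Set.Ico a (a + (q : ℤ)) \ deltaZ Δ).ncard :=
  ncard_cogenerators_ge (by exact_mod_cast hq) (fun _ => hΔ.add_mem_deltaZ)
    (hΔ.exists_add_natCast_mul_mem_deltaZ hp hq hpq) a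
end

section
/- Let p and q be coprime positive integers and m a positive integer with m < p. Then for every integer A, the number of integers x with A < x ≤ A + q such that x is congruent modulo p to jq for some j ∈ {0, 1, …, m−1} is at least ⌊mq/p⌋. -/
/-!
For `j < m < p` the residues `j * q` are pairwise distinct modulo `p`, so the count splits into
`m` residue classes. The class of `j * q` meets `(A, A + q]` in
`⌊(A + q - j q) / p⌋ - ⌊(A + q - (j + 1) q) / p⌋` points; these counts telescope to
`⌊(A + q) / p⌋ - ⌊(A + q - m q) / p⌋`, which is at least `⌊m q / p⌋` by superadditivity
of `⌊· / p⌋`.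
-/

open Finset

theorem Int.card_Ioc_filter_modEq_natCast {p : ℕ} (hp : 0 < p) {a b : ℤ} (hab : a ≤ b) (v : ℤ) :
    (#{x ∈ Ioc a b | x ≡ v [ZMOD p]} : ℤ) = (b - v) / p - (a - v) / p := by
  have hmono : (a - v) / (p : ℤ) ≤ (b - v) / p := Int.ediv_le_ediv (by omega) (by omega)
  rw [Int.Ioc_filter_modEq_card _ _ (by exact_mod_cast hp)]
  push_cast
  rw [← Int.cast_sub, ← Int.cast_sub, Rat.floor_intCast_div_natCast, Rat.floor_intCast_div_natCast]
  omega

theorem Nat.Coprime.eq_of_mul_modEq_mul {p q i j : ℕ} (hpq : p.Coprime q) (hi : i < p)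
    (hj : j < p) (h : (i : ℤ) * q ≡ j * q [ZMOD p]) : i = j := by
  have h' : i * q ≡ j * q [MOD p] := by
    exact_mod_cast Int.natCast_modEq_iff.mp (by exact_mod_cast h)
  have hij := Nat.ModEq.cancel_right_of_coprime hpq h'
  rwa [Nat.ModEq, Nat.mod_eq_of_lt hi, Nat.mod_eq_of_lt hj] at hij

theorem card_biUnion_Ioc_filter_modEq_mul {p q m : ℕ} (hpq : p.Coprime q) (hmp : m < p) (A : ℤ) :
    (#((range m).biUnion fun j => {x ∈ Ioc A (A + q) | x ≡ j * q [ZMOD p]}) : ℤ) =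
      (A + q) / p - (A + q - m * q) / p := by
  rw [card_biUnion]
  · have hclass : ∀ j : ℕ, (#{x ∈ Ioc A (A + q) | x ≡ j * q [ZMOD p]} : ℤ) =
        (A + q - j * q) / p - (A + q - (j + 1 : ℕ) * q) / p := by
      intro j
      rw [Int.card_Ioc_filter_modEq_natCast (by omega) (by omega)]
      congr 2
      push_cast
      ring
    push_cast
    simp only [hclass]
    rw [sum_range_sub' (fun j : ℕ => (A + q - j * q) / (p : ℤ))]
    simp
  · intro i hi j hj hij
    refine disjoint_filter.mpr fun x _ hxi hxj => hij ?_
    exact hpq.eq_of_mul_modEq_mul ((mem_range.mp hi).trans hmp) ((mem_range.mp hj).trans hmp)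
      (hxi.symm.trans hxj)

theorem stmt_6_general (p q : ℕ) (hpq : Nat.Coprime p q)
    (m : ℕ) (hmp : m < p) (A : ℤ) :
    (m * q / p : ℕ) ≤
      {x : ℤ | A < x ∧ x ≤ A + (q : ℤ) ∧
        ∃ j : ℕ, j < m ∧ x ≡ (j : ℤ) * q [ZMOD (p : ℤ)]}.ncard := by
  have hS : {x : ℤ | A < x ∧ x ≤ A + (q : ℤ) ∧ ∃ j : ℕ, j < m ∧ x ≡ (j : ℤ) * q [ZMOD (p : ℤ)]} =
      ↑((range m).biUnion fun j => {x ∈ Ioc A (A + q) | x ≡ j * q [ZMOD p]}) := by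
    ext x
    simp [and_assoc]
  rw [hS, Set.ncard_coe_finset, ← Nat.cast_le (α := ℤ), card_biUnion_Ioc_filter_modEq_mul hpq hmp]
  have hsuper := Int.ediv_add_ediv_le_add_ediv (x := A + q - m * q) (y := m * q) (z := p)
    (by omega)
  rw [sub_add_cancel] at hsuper
  push_cast
  linarith

/-- for coprime positive `p, q` and `0 < m < p`, any interval `(A, A+q]` of
integers contains at least `⌊mq/p⌋` integers congruent modulo `p` to `jq` for some
`0 ≤ j < m`. -/
theorem stmt_6 (p q : ℕ) (hp : 0 < p) (hq : 0 < q) (hpq : Nat.Coprime p q)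
    (m : ℕ) (hm : 0 < m) (hmp : m < p) (A : ℤ) :
    (m * q / p : ℕ) ≤
      {x : ℤ | A < x ∧ x ≤ A + (q : ℤ) ∧
        ∃ j : ℕ, j < m ∧ x ≡ (j : ℤ) * q [ZMOD (p : ℤ)]}.ncard :=
  stmt_6_general p q hpq m hmp A
end

section
/- Let p and q be coprime positive integers, Δ a 0-normalized Γ^{p,q}-semi-module with p-basis 0 = a_0 < a_1 < … < a_{p-1}. Then for every k with 1 ≤ k ≤ p one has g(a_{k−1}) ≤ q − ⌈kq/p⌉. Consequently, the Young diagram D'(Δ) with columns g(a_0), g(a_1), …, g(a_{p-1}) is contained in R_+^{p,q}. -/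
/-- The `p`-basis of `Δ`: the set `Δ \ (Δ + p)` of `p`-generators of `Δ`. -/
def pBasis (p : ℕ) (Δ : Set ℕ) : Set ℕ := Δ \ ((· + p) '' Δ)

/-- `g(a) = |[a, a + q) \ Δ|`. -/
noncomputable def gInt (q : ℕ) (Δ : Set ℕ) (a : ℕ) : ℕ := (Set.Ico a (a + q) \ Δ).ncard

/-- The dimension of a semi-module: `dim Δ = Σ_{a ∈ p-basis} |[a, a + q) \ Δ|`. -/
noncomputable def dimDelta (p q : ℕ) (Δ : Set ℕ) : ℕ :=
  ∑ᶠ a ∈ pBasis p Δ, gInt q Δ a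

namespace IsSemiModule

variable {p q : ℕ} {Δ : Set ℕ}

lemma add_mem (hΔ : IsSemiModule p q Δ) {y : ℕ} (hy : y ∈ Δ) (t u : ℕ) :
    y + (t * p + u * q) ∈ Δ :=
  hΔ.2 y hy _ ⟨t, u, rfl⟩

lemma eq_of_modEq_of_mem_pBasis (hΔ : IsSemiModule p q Δ) {x y : ℕ} (hx : x ∈ pBasis p Δ)
    (hy : y ∈ pBasis p Δ) (hxy : x ≡ y [MOD p]) : x = y := by
  wlog hle : x ≤ y generalizing x y
  · exact (this hy hx hxy.symm (by omega)).symm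
  obtain ⟨t, ht⟩ := (Nat.modEq_iff_dvd' hle).mp hxy
  rcases t with _ | t
  · omega
  · refine absurd ⟨x + t * p, by simpa using hΔ.add_mem hx.1 t 0, ?_⟩ hy.2
    show x + t * p + p = y
    rw [Nat.mul_succ] at ht
    have : t * p = p * t := Nat.mul_comm _ _
    omega

lemma add_mul_mod_mem (hΔ : IsSemiModule p q Δ) {b y j s : ℕ} (hy : y ∈ Δ) (hyb : y ≤ b)
    (hyj : y + j * q ≡ b [MOD p]) (hjs : j * q < s * p + p) (hsj : s * p < (j + 1) * q) :
    b + s * p % q ∈ Δ := by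
  -- `b + s p = y + j q + t p`, and `t ≥ 0` because `y + j q < b + s p + p`.
  obtain ⟨t, ht⟩ := (hyj.trans (Nat.add_mul_mod_self_right b s p).symm).dvd
  have ht0 : 0 ≤ t := by
    by_contra! h
    have : (p : ℤ) * t ≤ -p := by nlinarith
    push_cast at ht
    linarith
  lift t to ℕ using ht0
  have hq : 0 < q := Nat.pos_of_ne_zero (by rintro rfl; simp at hsj)
  have hj' : s * p / q ≤ j := Nat.lt_succ_iff.mp ((Nat.div_lt_iff_lt_mul hq).mpr hsj)
  have hdiv := Nat.div_add_mod (s * p) q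
  have key : b + s * p % q = y + (t * p + (j - s * p / q) * q) := by
    rw [Nat.sub_mul]
    have : s * p / q * q ≤ j * q := Nat.mul_le_mul_right _ hj'
    zify [this] at ht hdiv ⊢
    linear_combination ht + hdiv
  exact key ▸ hΔ.add_mem hy t _

end IsSemiModule

/-- The `j < p` for which the residue class of `b - j q` modulo `p` meets `Δ` at or below `b`. -/
def shiftsBelow (p q : ℕ) (Δ : Set ℕ) (b : ℕ) : Set ℕ :=
  {j | j < p ∧ ∃ y ∈ Δ, y ≤ b ∧ y + j * q ≡ b [MOD p]}

lemma ncard_shiftsBelow_mul_le {p q : ℕ} {Δ : Set ℕ} (hpq : p.Coprime q)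
    (hΔ : IsSemiModule p q Δ) (b : ℕ) :
    (shiftsBelow p q Δ b).ncard * q ≤ p * (Set.Ico b (b + q) ∩ Δ).ncard := by
  let f : ℕ × ℕ → ℕ × ℕ := fun ji =>
    ((b + (ji.1 * q + ji.2) / p * p % q), (ji.1 * q + ji.2) % p)
  have hlt : ∀ {j i}, j < p → i < q → (j * q + i) / p < q := fun hj hi =>
    (Nat.div_lt_iff_lt_mul (by omega)).mpr (by nlinarith)
  have hmaps : ∀ ji ∈ shiftsBelow p q Δ b ×ˢ Set.Iio q,
      f ji ∈ (Set.Ico b (b + q) ∩ Δ) ×ˢ Set.Iio p := by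
    rintro ⟨j, i⟩ ⟨⟨hj, y, hy, hyb, hyj⟩, hi : i < q⟩
    have hp : 0 < p := by omega
    refine ⟨⟨⟨by simp [f], by simpa [f] using Nat.mod_lt _ (by omega : 0 < q)⟩, ?_⟩,
      Nat.mod_lt _ hp⟩
    show b + (j * q + i) / p * p % q ∈ Δ
    refine hΔ.add_mul_mod_mem (j := j) hy hyb hyj ?_ ?_
    · have := Nat.lt_div_mul_add (a := j * q + i) hp
      omega
    · have := Nat.div_mul_le_self (j * q + i) p
      rw [Nat.succ_mul]
      omega
  have hinj : Set.InjOn f (shiftsBelow p q Δ b ×ˢ Set.Iio q) := by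
    rintro ⟨j, i⟩ ⟨⟨hj, -⟩, hi : i < q⟩ ⟨j', i'⟩ ⟨⟨hj', -⟩, hi' : i' < q⟩ h
    simp only [f, Prod.mk.injEq, Nat.add_left_cancel_iff] at h
    obtain ⟨hdiv, hmod⟩ := h
    have hquot : (j * q + i) / p = (j' * q + i') / p :=
      (Nat.ModEq.cancel_right_of_coprime (Nat.coprime_comm.mp hpq) hdiv).eq_of_lt_of_lt
        (hlt hj hi) (hlt hj' hi')
    have hn : j * q + i = j' * q + i' := by
      rw [← Nat.div_add_mod' (j * q + i) p, ← Nat.div_add_mod' (j' * q + i') p, hquot, hmod]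
    have hq : 0 < q := by omega
    obtain ⟨hj₁, hi₁⟩ := (Nat.div_mod_unique hq).mpr ⟨(by ring : i + q * j = j * q + i), hi⟩
    obtain ⟨hj₂, hi₂⟩ := (Nat.div_mod_unique hq).mpr ⟨(by ring : i' + q * j' = j' * q + i'), hi'⟩
    rw [hn] at hj₁ hi₁
    exact Prod.ext (hj₁.symm.trans hj₂) (hi₁.symm.trans hi₂)
  calc (shiftsBelow p q Δ b).ncard * q = (shiftsBelow p q Δ b ×ˢ Set.Iio q).ncard := by
        rw [Set.ncard_prod, Set.ncard_Iio_nat]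
    _ ≤ ((Set.Ico b (b + q) ∩ Δ) ×ˢ Set.Iio p).ncard :=
        Set.ncard_le_ncard_of_injOn f hmaps hinj
          (((Set.finite_Ico _ _).inter_of_left _).prod (Set.finite_Iio _))
    _ = p * (Set.Ico b (b + q) ∩ Δ).ncard := by rw [Set.ncard_prod, Set.ncard_Iio_nat, mul_comm]

lemma ncard_le_ncard_shiftsBelow {p q : ℕ} {Δ S : Set ℕ} (hp : 0 < p) (hpq : p.Coprime q)
    {b : ℕ} (hSΔ : S ⊆ Δ) (hSb : ∀ y ∈ S, y ≤ b)
    (hS : ∀ x ∈ S, ∀ y ∈ S, x ≡ y [MOD p] → x = y) :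
    S.ncard ≤ (shiftsBelow p q Δ b).ncard := by
  have : NeZero p := ⟨hp.ne'⟩
  let j : ℕ → ℕ := fun y => (((b : ZMod p) - y) * (q : ZMod p)⁻¹).val
  have hj : ∀ y, y + j y * q ≡ b [MOD p] := fun y => by
    rw [← ZMod.natCast_eq_natCast_iff]
    push_cast [j, ZMod.natCast_val, ZMod.cast_id]
    linear_combination ((b : ZMod p) - y) * ZMod.coe_mul_inv_eq_one q hpq.symm
  refine Set.ncard_le_ncard_of_injOn j
    (fun y hy => ⟨ZMod.val_lt _, y, hSΔ hy, hSb y hy, hj y⟩) (fun x hx y hy hxy => ?_)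
    ((Set.finite_Iio p).subset fun _ h => h.1)
  have hxb := hj x
  rw [hxy] at hxb
  exact hS x hx y hy (Nat.ModEq.add_right_cancel' _ (hxb.trans (hj y).symm))

lemma gInt_add_ncard_inter (q : ℕ) (Δ : Set ℕ) (a : ℕ) :
    gInt q Δ a + (Set.Ico a (a + q) ∩ Δ).ncard = q := by
  rw [gInt, add_comm, Set.ncard_inter_add_ncard_sdiff_eq_ncard _ _ (Set.finite_Ico _ _),
    Set.ncard_Ico_nat, Nat.add_sub_cancel_left]

lemma StrictMono.ncard_image_Iic {p : ℕ} {β : Type*} [Preorder β] {a : Fin p → β}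
    (ha : StrictMono a) (i : Fin p) :
    (a '' Set.Iic i).ncard = (i : ℕ) + 1 := by
  rw [Set.ncard_image_of_injective _ ha.injective, ← Finset.coe_Iic, Set.ncard_coe_finset,
    Fin.card_Iic]

lemma IsSemiModule.succ_mul_le_ncard_inter {p q : ℕ} {Δ : Set ℕ} (hpq : p.Coprime q)
    (hΔ : IsSemiModule p q Δ) {a : Fin p → ℕ} (ha : StrictMono a)
    (haB : ∀ m, a m ∈ pBasis p Δ) (i : Fin p) :
    ((i : ℕ) + 1) * q ≤ p * (Set.Ico (a i) (a i + q) ∩ Δ).ncard :=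
  calc ((i : ℕ) + 1) * q = (a '' Set.Iic i).ncard * q := by rw [ha.ncard_image_Iic]
    _ ≤ (shiftsBelow p q Δ (a i)).ncard * q := by
      refine Nat.mul_le_mul_right q (ncard_le_ncard_shiftsBelow i.pos hpq ?_ ?_ ?_)
      · rintro _ ⟨m, -, rfl⟩
        exact (haB m).1
      · rintro _ ⟨m, hm, rfl⟩
        exact ha.monotone hm
      · rintro _ ⟨m, -, rfl⟩ _ ⟨m', -, rfl⟩
        exact hΔ.eq_of_modEq_of_mem_pBasis (haB m) (haB m')
    _ ≤ _ := ncard_shiftsBelow_mul_le hpq hΔ _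

lemma gInt_le_sub_ceil {p q k b : ℕ} {Δ : Set ℕ} (hp : 0 < p)
    (h : (k + 1) * q ≤ p * (Set.Ico b (b + q) ∩ Δ).ncard) :
    gInt q Δ b ≤ q - ⌈((k + 1) * q : ℚ) / p⌉₊ := by
  have hceil : ⌈((k + 1) * q : ℚ) / p⌉₊ ≤ (Set.Ico b (b + q) ∩ Δ).ncard := by
    rw [Nat.ceil_le, div_le_iff₀ (by exact_mod_cast hp)]
    exact_mod_cast h.trans_eq (mul_comm _ _)
  have := gInt_add_ncard_inter q Δ b
  omega

lemma succ_mk_mem_Rplus {p q k y : ℕ} (hpq : p.Coprime q) (hk : k < p) (hy : 1 ≤ y)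
    (hyq : y ≤ q - ⌈((k + 1) * q : ℚ) / p⌉₊) : (k + 1, y) ∈ Rplus p q := by
  set C := ⌈((k + 1) * q : ℚ) / p⌉₊
  have hp : (0 : ℚ) < p := by exact_mod_cast hk.trans_le' k.zero_le
  have hkC : (k + 1) * q ≤ p * C := by
    have := Nat.le_ceil (((k + 1) * q : ℚ) / p)
    rw [div_le_iff₀ hp] at this
    exact_mod_cast (by linarith : ((k + 1) * q : ℚ) ≤ p * C)
  have hkC' : (k + 1) * q < p * C := by
    refine hkC.lt_of_ne fun h => ?_
    have hpk := Nat.le_of_dvd k.succ_pos (hpq.dvd_of_dvd_mul_right ⟨C, h⟩)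
    have hCq : C = q := by
      rw [show k + 1 = p by omega] at h
      exact (Nat.eq_of_mul_eq_mul_left (by omega) h).symm
    omega
  refine ⟨k.succ_pos, hy, ?_⟩
  have hyC : y + C ≤ q := by omega
  nlinarith [Nat.mul_le_mul_left p hyC]

theorem stmt_7_general (p q : ℕ) (hpq : Nat.Coprime p q)
    (Δ : Set ℕ) (hΔ : IsSemiModule p q Δ)
    (a : Fin p → ℕ) (ha : StrictMono a) (hrange : Set.range a = pBasis p Δ) :
    (∀ i : Fin p, gInt q Δ (a i) ≤ q - ⌈(((i : ℕ) + 1) * q : ℚ) / (p : ℚ)⌉₊) ∧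
    {c : ℕ × ℕ | ∃ i : Fin p, c.1 = (i : ℕ) + 1 ∧ 1 ≤ c.2 ∧ c.2 ≤ gInt q Δ (a i)} ⊆
      Rplus p q := by
  have haB : ∀ m, a m ∈ pBasis p Δ := fun m => hrange ▸ Set.mem_range_self m
  have hcol : ∀ i : Fin p, gInt q Δ (a i) ≤ q - ⌈(((i : ℕ) + 1) * q : ℚ) / (p : ℚ)⌉₊ :=
    fun i => gInt_le_sub_ceil i.pos (hΔ.succ_mul_le_ncard_inter hpq ha haB i)
  refine ⟨hcol, ?_⟩
  rintro ⟨x, y⟩ ⟨i, rfl, hy, hyg⟩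
  exact succ_mk_mem_Rplus hpq i.2 hy (hyg.trans (hcol i))

/-- if `0 = a_0 < a_1 < … < a_{p-1}` is the `p`-basis of `Δ`, then
`g(a_{k-1}) ≤ q - ⌈kq/p⌉` for all `1 ≤ k ≤ p` (here `k = i + 1` for `i : Fin p`);
consequently the diagram `D'(Δ)` with columns `g(a_0), …, g(a_{p-1})` is contained in
`R_+^{p,q}`. -/
theorem stmt_7 (p q : ℕ) (hp : 0 < p) (hq : 0 < q) (hpq : Nat.Coprime p q)
    (Δ : Set ℕ) (hΔ : IsSemiModule p q Δ)
    (a : Fin p → ℕ) (ha : StrictMono a) (hrange : Set.range a = pBasis p Δ) :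
    (∀ i : Fin p, gInt q Δ (a i) ≤ q - ⌈(((i : ℕ) + 1) * q : ℚ) / (p : ℚ)⌉₊) ∧
    {c : ℕ × ℕ | ∃ i : Fin p, c.1 = (i : ℕ) + 1 ∧ 1 ≤ c.2 ∧ c.2 ≤ gInt q Δ (a i)} ⊆
      Rplus p q :=
  stmt_7_general p q hpq Δ hΔ a ha hrange
end

section
/- Let n ≥ 1 and let Δ be a 0-normalized Γ^{n,n+1}-semi-module with n-basis 0 = a_0 < a_1 < … < a_{n-1}. Then for every i with 0 ≤ i ≤ n−2, the number of n-generators of Δ in the closed interval [a_i + n, a_{i+1} + n] equals g(a_i) − g(a_{i+1}). -/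
/-!
Let `Δ ⊆ ℕ` be closed under `+ n` and meet every residue class mod `n`. Then each residue class
contains exactly one `n`-generator, its least element in `Δ`. For any `a`, the gaps of `Δ` in the
window `[a, a + n)` then correspond to the generators `b ≥ a + n`: a gap `x` of the window is sent
to the generator of its class, which lies above `x` and hence at least `n` above it, and a
generator `b ≥ a + n` is sent to the point of its class in the window. When `a + n ∈ Δ` the
window `[a, a + n]` of `g(a)` has the same gaps, so `g(a) = #{b generator | b ≥ a + n}`.
Subtracting this for `a_{i+1}` from the one for `a_i` counts the generators in
`[a_i + n, a_{i+1} + n)`, and `a_{i+1} + n ∈ Δ + n` is not a generator.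
-/

section AddClosed

variable {n : ℕ} {Δ : Set ℕ}

theorem mem_of_le_of_modEq (hΔ : ∀ x ∈ Δ, x + n ∈ Δ) {x y : ℕ} (hx : x ∈ Δ) (hxy : x ≤ y)
    (h : x ≡ y [MOD n]) : y ∈ Δ := by
  have hmul : ∀ k, x + n * k ∈ Δ := fun k => by
    induction k with
    | zero => simpa using hx
    | succ k ih => simpa [Nat.mul_succ, ← add_assoc] using hΔ _ ih
  obtain ⟨k, hk⟩ := (Nat.modEq_iff_dvd' hxy).1 h
  simpa [show x + n * k = y by omega] using hmul k

theorem eq_of_mem_pBasis_of_le_of_modEq (hΔ : ∀ x ∈ Δ, x + n ∈ Δ) {b x : ℕ}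
    (hb : b ∈ pBasis n Δ) (hx : x ∈ Δ) (hxb : x ≤ b) (h : x ≡ b [MOD n]) : b = x := by
  by_contra hne
  have hdvd : n ∣ b - x := (Nat.modEq_iff_dvd' hxb).1 h
  have hnb : n ≤ b - x := Nat.le_of_dvd (by omega) hdvd
  have hmod : x ≡ b - n [MOD n] := (Nat.modEq_iff_dvd' (by omega)).2 <| by
    rw [show b - n - x = b - x - n by omega]
    exact Nat.dvd_sub hdvd dvd_rfl
  refine hb.2 ⟨b - n, mem_of_le_of_modEq hΔ hx (by omega) hmod, ?_⟩
  change b - n + n = b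
  omega

theorem eq_of_mem_pBasis_of_modEq (hΔ : ∀ x ∈ Δ, x + n ∈ Δ) {b b' : ℕ}
    (hb : b ∈ pBasis n Δ) (hb' : b' ∈ pBasis n Δ) (h : b ≡ b' [MOD n]) : b = b' := by
  rcases le_total b b' with hle | hle
  · exact (eq_of_mem_pBasis_of_le_of_modEq hΔ hb' hb.1 hle h).symm
  · exact eq_of_mem_pBasis_of_le_of_modEq hΔ hb hb'.1 hle h.symm

theorem exists_mem_pBasis_modEq (hn : 0 < n) {r : ℕ} (hr : ∃ x ∈ Δ, x ≡ r [MOD n]) :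
    ∃ b ∈ pBasis n Δ, b ≡ r [MOD n] := by
  set S := {x | x ∈ Δ ∧ x ≡ r [MOD n]}
  obtain ⟨hmem, hmod⟩ : sInf S ∈ S := Nat.sInf_mem hr
  refine ⟨sInf S, ⟨hmem, ?_⟩, hmod⟩
  rintro ⟨y, hy, hyb⟩
  change y + n = sInf S at hyb
  have hyS : y ∈ S := ⟨hy, (Nat.add_modEq_left_iff.2 dvd_rfl).symm.trans (hyb ▸ hmod)⟩
  have := Nat.sInf_le hyS
  omega

theorem ncard_Ico_diff_eq_ncard_pBasis (hn : 0 < n) (hΔ : ∀ x ∈ Δ, x + n ∈ Δ)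
    (hres : ∀ r, ∃ x ∈ Δ, x ≡ r [MOD n]) (a : ℕ) :
    (Set.Ico a (a + n) \ Δ).ncard = {b | b ∈ pBasis n Δ ∧ a + n ≤ b}.ncard := by
  have hψ : ∀ b, a ≤ b → a + (b - a) % n ≡ b [MOD n] := fun b hab => by
    simpa [Nat.add_sub_cancel' hab] using (Nat.mod_modEq (b - a) n).add_left a
  have hlt : ∀ b, (b - a) % n < n := fun b => Nat.mod_lt _ hn
  symm
  refine Set.ncard_congr (fun b _ => a + (b - a) % n) ?_ ?_ ?_
  · rintro b ⟨hb, hab⟩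
    refine ⟨⟨by omega, by linarith [hlt b]⟩, fun hx => ?_⟩
    have := eq_of_mem_pBasis_of_le_of_modEq hΔ hb hx (by linarith [hlt b]) (hψ b (by omega))
    linarith [hlt b]
  · rintro b b' ⟨hb, hab⟩ ⟨hb', hab'⟩ h
    exact eq_of_mem_pBasis_of_modEq hΔ hb hb'
      ((hψ b (by omega)).symm.trans (h ▸ hψ b' (by omega)))
  · rintro x ⟨⟨hax, hxa⟩, hx⟩
    obtain ⟨b, hb, hbx⟩ := exists_mem_pBasis_modEq hn (hres x)
    have hxb : x < b := lt_of_not_ge fun hbx' => hx (mem_of_le_of_modEq hΔ hb.1 hbx' hbx)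
    obtain ⟨k, hk⟩ := (Nat.modEq_iff_dvd' hxb.le).1 hbx.symm
    have hnb : n ≤ b - x := Nat.le_of_dvd (by omega) ⟨k, hk⟩
    refine ⟨b, ⟨hb, by omega⟩, ?_⟩
    rw [show b - a = (x - a) + n * k by omega, Nat.add_mul_mod_self_left,
      Nat.mod_eq_of_lt (by omega)]
    omega

theorem gInt_succ_eq_ncard_pBasis (hn : 0 < n) (hΔ : ∀ x ∈ Δ, x + n ∈ Δ)
    (hres : ∀ r, ∃ x ∈ Δ, x ≡ r [MOD n]) {a : ℕ} (ha : a ∈ Δ) :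
    gInt (n + 1) Δ a = {b | b ∈ pBasis n Δ ∧ a + n ≤ b}.ncard := by
  rw [gInt, ← add_assoc, Set.Ico_add_one_right_eq_Icc, ← Set.Ico_insert_right (by omega),
    Set.insert_sdiff_of_mem _ (hΔ a ha), ncard_Ico_diff_eq_ncard_pBasis hn hΔ hres]

end AddClosed

theorem IsSemiModule.add_mem_s8 {n : ℕ} {Δ : Set ℕ} (hΔ : IsSemiModule n (n + 1) Δ) :
    ∀ x ∈ Δ, x + n ∈ Δ :=
  fun x hx => hΔ.2 x hx n ⟨1, 0, by ring⟩

theorem IsSemiModule.exists_mem_modEq {n : ℕ} {Δ : Set ℕ} (hΔ : IsSemiModule n (n + 1) Δ)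
    (r : ℕ) : ∃ x ∈ Δ, x ≡ r [MOD n] := by
  refine ⟨r * (n + 1), by simpa using hΔ.2 0 hΔ.1 _ ⟨0, r, by ring⟩, ?_⟩
  simp [Nat.ModEq, mul_add]

theorem ncard_sep_Icc_eq_sub {S : Set ℕ} (hS : S.Finite) {u v : ℕ} (huv : u ≤ v) (hv : v ∉ S) :
    ({x | x ∈ S ∧ u ≤ x ∧ x ≤ v}.ncard : ℤ) =
      {x | x ∈ S ∧ u ≤ x}.ncard - {x | x ∈ S ∧ v ≤ x}.ncard := by
  have hsub : {x | x ∈ S ∧ v ≤ x} ⊆ {x | x ∈ S ∧ u ≤ x} := fun x hx => ⟨hx.1, huv.trans hx.2⟩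
  have hdiff : {x | x ∈ S ∧ u ≤ x ∧ x ≤ v} = {x | x ∈ S ∧ u ≤ x} \ {x | x ∈ S ∧ v ≤ x} := by
    ext x
    exact ⟨fun ⟨hx, hux, hxv⟩ => ⟨⟨hx, hux⟩, fun ⟨_, hvx⟩ => hv (le_antisymm hxv hvx ▸ hx)⟩,
      fun ⟨⟨hx, hux⟩, hvx⟩ => ⟨hx, hux, le_of_not_ge fun h => hvx ⟨hx, h⟩⟩⟩
  rw [hdiff, ← Set.ncard_sdiff_add_ncard_of_subset hsub (hS.subset fun x hx => hx.1)]
  push_cast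
  ring

/-- for the `n`-basis `0 = a_0 < … < a_{n-1}` of a `Γ^{n,n+1}`-semi-module,
the number of `n`-generators in `[a_i + n, a_{i+1} + n]` equals `g(a_i) - g(a_{i+1})`. -/
theorem stmt_8 (n : ℕ) (Δ : Set ℕ) (hΔ : IsSemiModule n (n + 1) Δ)
    (a : Fin n → ℕ) (ha : StrictMono a) (hrange : Set.range a = pBasis n Δ)
    (i : ℕ) (hi : i + 1 < n) :
    ({x | x ∈ pBasis n Δ ∧ a ⟨i, by omega⟩ + n ≤ x ∧ x ≤ a ⟨i + 1, hi⟩ + n}.ncard : ℤ) =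
      (gInt (n + 1) Δ (a ⟨i, by omega⟩) : ℤ) - (gInt (n + 1) Δ (a ⟨i + 1, hi⟩) : ℤ) := by
  have hn : 0 < n := by omega
  have hmem : ∀ j, a j ∈ Δ := fun j => (hrange ▸ Set.mem_range_self j : a j ∈ pBasis n Δ).1
  have hle : a ⟨i, by omega⟩ ≤ a ⟨i + 1, hi⟩ := ha.monotone (Fin.mk_le_mk.2 (by omega))
  rw [gInt_succ_eq_ncard_pBasis hn hΔ.add_mem_s8 hΔ.exists_mem_modEq (hmem _),
    gInt_succ_eq_ncard_pBasis hn hΔ.add_mem_s8 hΔ.exists_mem_modEq (hmem _)]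
  exact ncard_sep_Icc_eq_sub (hrange ▸ Set.finite_range a) (by omega)
    fun h => h.2 ⟨_, hmem _, rfl⟩
end

section
/- Let n ≥ 1, let Δ be a 0-normalized Γ^{n,n+1}-semi-module, and let k ≥ 0 be an integer. If the interval [kn, (k+1)n] contains an n-generator of Δ and s_k denotes the minimal n-generator of Δ in this interval, then the whole interval of integers [kn, s_k] is contained in Δ. -/
namespace IsSemiModule

variable {p q : ℕ} {Δ : Set ℕ}

theorem mul_left_mem (hΔ : IsSemiModule p q Δ) (c : ℕ) : c * p ∈ Δ := by
  simpa using hΔ.2 0 hΔ.1 (c * p) ⟨c, 0, by ring⟩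

theorem add_one_mem_of_notMem_pBasis (hΔ : IsSemiModule p (p + 1) Δ) {y : ℕ} (hy : y ∈ Δ)
    (hy' : y ∉ pBasis p Δ) : y + 1 ∈ Δ := by
  obtain ⟨z, hz, rfl⟩ : y ∈ (· + p) '' Δ := by
    by_contra h
    exact hy' ⟨hy, h⟩
  simpa [add_assoc] using hΔ.2 z hz (p + 1) ⟨0, 1, by ring⟩

end IsSemiModule

theorem Set.Icc_subset_of_add_one_mem {S : Set ℕ} {a b : ℕ} (ha : a ∈ S)
    (hstep : ∀ y, a ≤ y → y < b → y ∈ S → y + 1 ∈ S) : Set.Icc a b ⊆ S := by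
  rintro x ⟨hax, hxb⟩
  induction x, hax using Nat.le_induction with
  | base => exact ha
  | succ y hay ih => exact hstep y hay (by omega) (ih (by omega))

theorem stmt_10_general (n : ℕ) (Δ : Set ℕ) (hΔ : IsSemiModule n (n + 1) Δ)
    (k : ℕ) (s : ℕ) (hs2 : s ≤ (k + 1) * n)
    (hmin : ∀ x ∈ pBasis n Δ, k * n ≤ x → x ≤ (k + 1) * n → s ≤ x) :
    Set.Icc (k * n) s ⊆ Δ := by
  refine Set.Icc_subset_of_add_one_mem (hΔ.mul_left_mem k) fun y hky hys hy => ?_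
  have hy_not_gen : y ∉ pBasis n Δ := fun hgen => absurd (hmin y hgen hky (by omega)) (by omega)
  exact hΔ.add_one_mem_of_notMem_pBasis hy hy_not_gen

/-- if `s_k` is the minimal `n`-generator of `Δ` in `[kn, (k+1)n]`, then
`[kn, s_k] ⊆ Δ`. -/
theorem stmt_10 (n : ℕ) (hn : 1 ≤ n) (Δ : Set ℕ) (hΔ : IsSemiModule n (n + 1) Δ)
    (k : ℕ) (s : ℕ) (hs : s ∈ pBasis n Δ) (hs1 : k * n ≤ s) (hs2 : s ≤ (k + 1) * n)
    (hmin : ∀ x ∈ pBasis n Δ, k * n ≤ x → x ≤ (k + 1) * n → s ≤ x) :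
    Set.Icc (k * n) s ⊆ Δ :=
  stmt_10_general n Δ hΔ k s hs2 hmin
end

section
/- Let n ≥ 1. The map sending a 0-normalized Γ^{n,n+1}-semi-module Δ with n-basis 0 = a_0 < a_1 < … < a_{n-1} to the sequence (g(a_0), g(a_1), …, g(a_{n-1})) is a bijection from the set of 0-normalized Γ^{n,n+1}-semi-modules onto the set of weakly decreasing sequences λ_1 ≥ λ_2 ≥ … ≥ λ_n ≥ 0 of nonnegative integers with λ_k ≤ n − k for all 1 ≤ k ≤ n (i.e. onto the set of Young diagrams contained in the staircase (n−1, n−2, …, 1, 0), which is R_+^{n,n+1}). In particular the sequence (g(a_0), …, g(a_{n-1})) is always weakly decreasing. -/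
/-- The sequence `(g(a_0), …, g(a_{n-1}))`, where `0 = a_0 < a_1 < … < a_{n-1}` is the
`n`-basis of `Δ` (enumerated in increasing order by `Nat.nth`). -/
noncomputable def gSeq (n : ℕ) (Δ : Set ℕ) (k : Fin n) : ℕ :=
  gInt (n + 1) Δ (Nat.nth (· ∈ pBasis n Δ) (k : ℕ))

/-!
Write `Δ` through its area word `c`: the generator of `Δ` in the residue class `r < n` is
`r + n * c r`, so that `Δ = {x | c (x % n) ≤ x / n}`, and `Δ + (n + 1) ⊆ Δ` says exactly that
`c 0 = 0` and `c (r + 1) ≤ c r + 1`. Generators compare like the keys `(c r, r)` in lexicographic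
order, and `g(r + n * c r)` counts the letters whose key exceeds `(c r + 1, r)`. So `gSeq` is
Haglund's zeta map on area sequences of Dyck paths, and it remains to see that zeta is a bijection
onto the diagrams inside the staircase.

This goes by induction on the length. Removing the last occurrence of the largest letter of `c`
(it has the top key and `g`-value `0`) leaves an area word `e`, and `zeta c` is `zeta e` with a new
first column of height `J`, the number of keys `(e r + 1, r)` below the key of the removed letter.
For a fixed `e`, `J` is strictly increasing along the admissible insertions, and each admissible
insertion with `J` less than the length of `e` has a successor whose `J` is one larger; the
smallest admissible insertion, just after the last largest letter of `e`, has `J` equal to the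
height of the first column of `zeta e`.
-/

open Finset

/-- Area sequences of Dyck paths of size `n`, extended by zero. -/
def IsAreaWord (n : ℕ) (c : ℕ → ℕ) : Prop :=
  c 0 = 0 ∧ (∀ i, i + 1 < n → c (i + 1) ≤ c i + 1) ∧ ∀ i, n ≤ i → c i = 0

/-- Row lengths of the Young diagrams inside the staircase `(n - 1, …, 1, 0)`, extended by zero. -/
def IsStaircase (n : ℕ) (l : ℕ → ℕ) : Prop :=
  Antitone l ∧ ∀ k, l k ≤ n - (k + 1)

namespace AreaWord

section Rank

variable {α : Type*} [LinearOrder α] {f : ℕ → α} {n r s k : ℕ}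

def rank (n : ℕ) (f : ℕ → α) (s : ℕ) : ℕ := #{r ∈ range n | f r < f s}

lemma rank_lt_rank (hr : r < n) (h : f r < f s) : rank n f r < rank n f s := by
  refine card_lt_card ((ssubset_iff_of_subset fun x hx => ?_).2 ⟨r, ?_, ?_⟩)
  · simp only [mem_filter] at hx ⊢
    exact ⟨hx.1, hx.2.trans h⟩
  · simpa using ⟨hr, h⟩
  · simp

lemma rank_lt (hs : s < n) : rank n f s < n := by
  simpa [rank] using card_lt_card (filter_ssubset.2 ⟨s, mem_range.2 hs, lt_irrefl (f s)⟩)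

lemma rank_injOn (hf : Function.Injective f) : Set.InjOn (rank n f) (Set.Iio n) := by
  intro r hr s hs h
  rcases lt_trichotomy (f r) (f s) with hlt | heq | hgt
  · exact absurd h (rank_lt_rank hr hlt).ne
  · exact hf heq
  · exact absurd h (rank_lt_rank hs hgt).ne'

lemma exists_rank_eq (hf : Function.Injective f) (hk : k < n) : ∃ s < n, rank n f s = k := by
  obtain ⟨s, hs, hsk⟩ := surj_on_of_inj_on_of_card_le (s := range n) (t := range n)
    (fun s _ => rank n f s) (fun s hs => mem_range.2 (rank_lt (mem_range.1 hs)))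
    (fun r s hr hs => rank_injOn hf (mem_range.1 hr) (mem_range.1 hs)) le_rfl k (mem_range.2 hk)
  exact ⟨s, mem_range.1 hs, hsk.symm⟩

lemma card_filter_le_eq_rank_add_one (hf : Function.Injective f) (hs : s < n) :
    #{r ∈ range n | f r ≤ f s} = rank n f s + 1 := by
  have : {r ∈ range n | f r ≤ f s} = insert s {r ∈ range n | f r < f s} := by
    ext r
    simp only [mem_filter, mem_insert, le_iff_lt_or_eq, hf.eq_iff]
    constructor
    · rintro ⟨hr, hlt | rfl⟩ <;> simp_all
    · rintro (rfl | ⟨hr, hlt⟩) <;> simp_all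
  rw [this, card_insert_of_notMem (by simp), rank]

lemma mem_iff_rank_lt (hf : Function.Injective f) {P : ℕ → Prop} [DecidablePred P]
    (hP : ∀ r < n, ∀ s < n, f r < f s → P s → P r) (hs : s < n) :
    P s ↔ rank n f s < #{r ∈ range n | P r} := by
  constructor
  · intro hPs
    refine card_lt_card ((ssubset_iff_of_subset fun r hr => ?_).2 ⟨s, ?_, by simp⟩)
    · simp only [mem_filter, mem_range] at hr ⊢
      exact ⟨hr.1, hP r hr.1 s hs hr.2 hPs⟩
    · simpa using ⟨hs, hPs⟩
  · intro hlt
    by_contra hPs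
    refine hlt.not_ge (card_le_card fun r hr => ?_)
    simp only [mem_filter, mem_range] at hr ⊢
    refine ⟨hr.1, ?_⟩
    rcases lt_trichotomy (f r) (f s) with hlt | heq | hgt
    · exact hlt
    · exact absurd (hf heq ▸ hr.2) hPs
    · exact absurd (hP s hs r hr.1 hgt hr.2) hPs

end Rank

def key (c : ℕ → ℕ) (i : ℕ) : ℕ ×ₗ ℕ := toLex (c i, i)

lemma key_injective (c : ℕ → ℕ) : Function.Injective (key c) := fun i j h => by
  simpa [key] using congrArg (fun x => (ofLex x).2) h

/-- `g` of the generator `s + n * c s` of the semimodule of `c` (see `gInt_semimoduleOf`). -/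
def gval (n : ℕ) (c : ℕ → ℕ) (s : ℕ) : ℕ := #{r ∈ range n | toLex (c s + 1, s) < key c r}

/-- Haglund's zeta map: the `g`-values of the letters, listed by increasing key. -/
def zeta (n : ℕ) (c : ℕ → ℕ) (k : ℕ) : ℕ :=
  ∑ s ∈ range n, if rank n (key c) s = k then gval n c s else 0

variable {n m k r s p V : ℕ} {c e : ℕ → ℕ}

lemma zeta_rank (hs : s < n) : zeta n c (rank n (key c) s) = gval n c s := by
  rw [zeta, sum_eq_single s (fun r hr hrs => if_neg fun h => hrs
    (rank_injOn (key_injective c) (mem_range.1 hr) hs h)) (by simp [hs]), if_pos rfl]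

lemma zeta_of_le (hk : n ≤ k) : zeta n c k = 0 :=
  sum_eq_zero fun _ hs => if_neg ((rank_lt (mem_range.1 hs)).trans_le hk).ne

lemma gval_eq_zero_iff : gval n c s = 0 ↔ ∀ r < n, key c r ≤ toLex (c s + 1, s) := by
  simp [gval, filter_eq_empty_iff]

def succAbove (p r : ℕ) : ℕ := if r < p then r else r + 1

def insertNth (p V : ℕ) (e : ℕ → ℕ) (i : ℕ) : ℕ :=
  if i < p then e i else if i = p then V else e (i - 1)

def removeNth (c : ℕ → ℕ) (p r : ℕ) : ℕ := c (succAbove p r)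

lemma insertNth_of_lt {i : ℕ} (hi : i < p) : insertNth p V e i = e i := if_pos hi

lemma insertNth_of_gt {i : ℕ} (hi : p < i) : insertNth p V e i = e (i - 1) := by
  simp [insertNth, hi.not_gt, hi.ne']

@[simp] lemma insertNth_self : insertNth p V e p = V := by simp [insertNth]

@[simp] lemma insertNth_succAbove : insertNth p V e (succAbove p r) = e r := by
  unfold insertNth succAbove
  split_ifs <;> first | rfl | omega

lemma insertNth_removeNth : insertNth p (c p) (removeNth c p) = c := by
  ext i
  unfold insertNth removeNth succAbove
  split_ifs with _ hip
  · rfl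
  · rw [hip]
  · omega
  · congr 1; omega

lemma removeNth_of_lt (hr : r < p) : removeNth c p r = c r := by simp [removeNth, succAbove, hr]

lemma removeNth_of_le (hr : p ≤ r) : removeNth c p r = c (r + 1) := by
  simp [removeNth, succAbove, hr.not_gt]

lemma succAbove_lt (hr : r < m) : succAbove p r < m + 1 := by
  unfold succAbove; split_ifs <;> omega

lemma succAbove_ne : succAbove p r ≠ p := by unfold succAbove; split_ifs <;> omega

lemma exists_succAbove_eq {i : ℕ} (hp : p ≤ m) (hi : i < m + 1) (hip : i ≠ p) :
    ∃ r < m, succAbove p r = i := by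
  by_cases hi' : i < p
  · exact ⟨i, by omega, by simp [succAbove, hi']⟩
  · exact ⟨i - 1, by omega, by simp only [succAbove]; split_ifs <;> omega⟩

lemma sum_range_succ_succAbove {M : Type*} [AddCommMonoid M] (f : ℕ → M) (hp : p ≤ m) :
    ∑ i ∈ range (m + 1), f i = f p + ∑ r ∈ range m, f (succAbove p r) := by
  induction m, hp using Nat.le_induction with
  | base =>
    rw [sum_range_succ, add_comm]
    congr 1
    exact sum_congr rfl fun r hr => by simp [succAbove, mem_range.1 hr]
  | succ m hpm ih =>
    rw [sum_range_succ, ih, sum_range_succ _ m, add_assoc]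
    simp [succAbove, show ¬ m < p by omega]

lemma card_filter_range_succ_succAbove (P : ℕ → Prop) [DecidablePred P] (hp : p ≤ m) :
    #{i ∈ range (m + 1) | P i} = (if P p then 1 else 0) + #{r ∈ range m | P (succAbove p r)} := by
  simp only [card_filter]
  exact sum_range_succ_succAbove _ hp

section LexOrder

variable {a b : ℕ}

lemma toLex_succAbove_lt_toLex_succAbove :
    toLex (a, succAbove p r) < toLex (b, succAbove p s) ↔ toLex (a, r) < toLex (b, s) := by
  simp only [Prod.Lex.toLex_lt_toLex, succAbove]
  split_ifs <;> omega

lemma toLex_succAbove_lt_toLex :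
    toLex (a, succAbove p r) < toLex (b, p) ↔ toLex (a, r) < toLex (b, p) := by
  simp only [Prod.Lex.toLex_lt_toLex, succAbove]
  split_ifs <;> omega

lemma toLex_lt_toLex_succAbove :
    toLex (b, p) < toLex (a, succAbove p r) ↔ toLex (b, p) ≤ toLex (a, r) := by
  simp only [Prod.Lex.toLex_lt_toLex, Prod.Lex.toLex_le_toLex, succAbove]
  split_ifs <;> omega

end LexOrder

/-- `V` may be inserted at position `p` of the word `e` of length `m` as the last occurrence of
the largest letter. -/
def IsMaxInsertion (m : ℕ) (e : ℕ → ℕ) (V p : ℕ) : Prop :=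
  1 ≤ p ∧ p ≤ m ∧ V ≤ e (p - 1) + 1 ∧ ∀ r < m, key e r < toLex (V, p)

/-- The height of the column that the insertion of `V` at `p` adds to `zeta`. -/
def jump (m : ℕ) (e : ℕ → ℕ) (V p : ℕ) : ℕ := #{r ∈ range m | toLex (e r + 1, r) < toLex (V, p)}

lemma jump_le : jump m e V p ≤ m := (card_filter_le _ _).trans (card_range m).le

lemma lt_iff_rank_lt_jump (hr : r < m) :
    toLex (e r + 1, r) < toLex (V, p) ↔ rank m (key e) r < jump m e V p := by
  refine mem_iff_rank_lt (P := fun r => toLex (e r + 1, r) < toLex (V, p)) (key_injective e)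
    (fun r _ s _ hrs hs => lt_trans ?_ hs) hr
  simp only [key, Prod.Lex.toLex_lt_toLex] at hrs ⊢
  omega

namespace IsMaxInsertion

variable (h : IsMaxInsertion m e V p)
include h

lemma key_insertNth_lt {i : ℕ} (hi : i < m + 1) (hip : i ≠ p) :
    key (insertNth p V e) i < key (insertNth p V e) p := by
  obtain ⟨r, hr, rfl⟩ := exists_succAbove_eq h.2.1 hi hip
  simpa [key, toLex_succAbove_lt_toLex] using h.2.2.2 r hr

lemma rank_insertNth_succAbove (hr : r < m) :
    rank (m + 1) (key (insertNth p V e)) (succAbove p r) = rank m (key e) r := by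
  rw [rank, card_filter_range_succ_succAbove _ h.2.1, if_neg, zero_add]
  · simp only [rank, key, insertNth_succAbove, toLex_succAbove_lt_toLex_succAbove]
    rfl
  · simpa [key, toLex_lt_toLex_succAbove] using h.2.2.2 r hr

lemma rank_insertNth_self : rank (m + 1) (key (insertNth p V e)) p = m := by
  rw [rank, card_filter_range_succ_succAbove _ h.2.1, if_neg (lt_irrefl _), zero_add,
    filter_true_of_mem, card_range]
  exact fun r hr => by simpa [key, toLex_succAbove_lt_toLex] using h.2.2.2 r (mem_range.1 hr)

lemma gval_insertNth_self : gval (m + 1) (insertNth p V e) p = 0 := by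
  refine gval_eq_zero_iff.2 fun i hi => ?_
  by_cases hip : i = p
  · simp [hip, key, Prod.Lex.toLex_le_toLex]
  · simp only [insertNth_self]
    refine (h.key_insertNth_lt hi hip).le.trans ?_
    simp [key, Prod.Lex.toLex_le_toLex]

lemma gval_insertNth_succAbove :
    gval (m + 1) (insertNth p V e) (succAbove p r) =
      gval m e r + if toLex (e r + 1, r) < toLex (V, p) then 1 else 0 := by
  rw [gval, card_filter_range_succ_succAbove _ h.2.1, add_comm]
  simp only [gval, key, insertNth_self, insertNth_succAbove, toLex_succAbove_lt_toLex_succAbove,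
    toLex_succAbove_lt_toLex]
  rfl

lemma zeta_insertNth (k : ℕ) :
    zeta (m + 1) (insertNth p V e) k = zeta m e k + if k < jump m e V p then 1 else 0 := by
  have hJ : jump m e V p ≤ m := jump_le
  by_cases hk : k < m + 1
  swap
  · rw [zeta_of_le (by omega), zeta_of_le (by omega), if_neg (by omega)]
  obtain ⟨i, hi, rfl⟩ := exists_rank_eq (key_injective (insertNth p V e)) hk
  by_cases hip : i = p
  · subst hip
    rw [zeta_rank hi, h.gval_insertNth_self, h.rank_insertNth_self, zeta_of_le le_rfl,
      if_neg (by omega)]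
  obtain ⟨r, hr, rfl⟩ := exists_succAbove_eq h.2.1 hi hip
  rw [zeta_rank hi, h.gval_insertNth_succAbove, h.rank_insertNth_succAbove hr, zeta_rank hr]
  simp only [lt_iff_rank_lt_jump hr]

lemma zeta_eq_zero_of_jump_le (hk : jump m e V p ≤ k) : zeta m e k = 0 := by
  by_cases hkm : k < m
  swap
  · exact zeta_of_le (by omega)
  obtain ⟨s, hs, rfl⟩ := exists_rank_eq (key_injective e) hkm
  rw [zeta_rank hs, gval_eq_zero_iff]
  intro r hr
  by_contra hlt
  have := (lt_iff_rank_lt_jump hs).1 ((not_le.1 hlt).trans (h.2.2.2 r hr))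
  omega

lemma zeta_insertNth_ne_zero_iff :
    zeta (m + 1) (insertNth p V e) k ≠ 0 ↔ k < jump m e V p := by
  rw [h.zeta_insertNth]
  by_cases hk : k < jump m e V p
  · simp [hk]
  · simp [hk, h.zeta_eq_zero_of_jump_le (not_lt.1 hk)]

end IsMaxInsertion

lemma IsMaxInsertion.isAreaWord_insertNth (h : IsMaxInsertion m e V p) (he : IsAreaWord m e) :
    IsAreaWord (m + 1) (insertNth p V e) := by
  obtain ⟨hp, hpm, hV, hmax⟩ := h
  obtain ⟨he0, hstep, hzero⟩ := he
  have hnext : e p < V + 1 := by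
    rcases hpm.lt_or_eq with hpm | rfl
    · have := hmax p hpm
      simp only [key, Prod.Lex.toLex_lt_toLex] at this
      omega
    · rw [hzero _ le_rfl]; omega
  refine ⟨by rw [insertNth_of_lt (by omega), he0], fun i hi => ?_, fun i hi => ?_⟩
  · rcases lt_trichotomy (i + 1) p with hlt | heq | hgt
    · rw [insertNth_of_lt hlt, insertNth_of_lt (by omega)]
      exact hstep i (by omega)
    · rw [heq, insertNth_self, insertNth_of_lt (by omega)]
      simpa [← heq] using hV
    · rw [insertNth_of_gt hgt, Nat.add_sub_cancel]
      rcases (Nat.lt_succ_iff.1 hgt).eq_or_lt with rfl | hpi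
      · rw [insertNth_self]
        exact hnext.le
      · rw [insertNth_of_gt hpi]
        have := hstep (i - 1) (by omega)
        rwa [Nat.sub_add_cancel (by omega)] at this
  · rw [insertNth_of_gt (by omega), hzero _ (by omega)]

lemma isAreaWord_removeNth (hc : IsAreaWord (m + 1) c) (hp : 1 ≤ p) (hpm : p ≤ m)
    (hnext : c (p + 1) ≤ c (p - 1) + 1) : IsAreaWord m (removeNth c p) := by
  obtain ⟨hc0, hstep, hzero⟩ := hc
  refine ⟨by rw [removeNth_of_lt (by omega), hc0], fun i hi => ?_, fun i hi => ?_⟩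
  · rcases lt_trichotomy (i + 1) p with hlt | heq | hgt
    · rw [removeNth_of_lt hlt, removeNth_of_lt (by omega)]
      exact hstep i (by omega)
    · rw [removeNth_of_le heq.ge, removeNth_of_lt (by omega), heq]
      simpa [← heq] using hnext
    · rw [removeNth_of_le (by omega), removeNth_of_le (by omega)]
      exact hstep (i + 1) (by omega)
  · rw [removeNth_of_le (by omega), hzero _ (by omega)]

lemma exists_isMaxInsertion (hc : IsAreaWord (m + 1) c) (hm : 1 ≤ m) :
    ∃ e V p, IsAreaWord m e ∧ IsMaxInsertion m e V p ∧ insertNth p V e = c := by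
  obtain ⟨p, hp, hmax⟩ := exists_max_image (range (m + 1)) (key c) nonempty_range_add_one
  rw [mem_range] at hp
  have hlt : ∀ i < m + 1, i ≠ p → key c i < key c p := fun i hi hip =>
    (hmax i (mem_range.2 hi)).lt_of_ne ((key_injective c).ne hip)
  have hp1 : 1 ≤ p := by
    by_contra hp0
    have := hlt 1 (by omega) (by omega)
    simp [key, Prod.Lex.toLex_lt_toLex, show p = 0 by omega, hc.1] at this
  have hprev : c p ≤ c (p - 1) + 1 := by
    simpa [Nat.sub_add_cancel hp1] using hc.2.1 (p - 1) (by omega)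
  have hnext : c (p + 1) ≤ c (p - 1) + 1 := by
    rcases (Nat.lt_succ_iff.1 hp).lt_or_eq with hpm | rfl
    · have := hlt (p + 1) (by omega) (by omega)
      simp only [key, Prod.Lex.toLex_lt_toLex] at this
      omega
    · rw [hc.2.2 _ le_rfl]
      omega
  refine ⟨removeNth c p, c p, p, isAreaWord_removeNth hc hp1 (by omega) hnext,
    ⟨hp1, by omega, ?_, fun r hr => ?_⟩, insertNth_removeNth⟩
  · rwa [removeNth_of_lt (by omega)]
  · simpa [key, removeNth, toLex_succAbove_lt_toLex] using
      hlt (succAbove p r) (succAbove_lt hr) succAbove_ne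

/-- The letter just before the later insertion point is counted for it but not for the earlier
one. -/
lemma IsMaxInsertion.jump_lt_jump {V' p' : ℕ} (h : IsMaxInsertion m e V p)
    (h' : IsMaxInsertion m e V' p') (hlt : toLex (V, p) < toLex (V', p')) :
    jump m e V p < jump m e V' p' := by
  refine card_lt_card ((ssubset_iff_of_subset fun r hr => ?_).2 ⟨p' - 1, ?_⟩)
  · simp only [mem_filter] at hr ⊢
    exact ⟨hr.1, hr.2.trans hlt⟩
  · obtain ⟨hp', hp'm, hV', hmax'⟩ := h'
    have h₁ := h.2.2.2 (p' - 1) (by omega)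
    have h₂ := hmax' (p' - 1) (by omega)
    simp only [key, Prod.Lex.toLex_lt_toLex] at h₁ h₂ hlt
    simp only [mem_filter, mem_range, Prod.Lex.toLex_lt_toLex]
    omega

lemma IsMaxInsertion.eq_of_jump_eq {V' p' : ℕ} (h : IsMaxInsertion m e V p)
    (h' : IsMaxInsertion m e V' p') (hJ : jump m e V p = jump m e V' p') : V = V' ∧ p = p' := by
  rcases lt_trichotomy (toLex (V, p)) (toLex (V', p')) with hlt | heq | hgt
  · exact absurd hJ (h.jump_lt_jump h' hlt).ne
  · simpa using heq
  · exact absurd hJ (h'.jump_lt_jump h hgt).ne'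

/-- The next admissible insertion puts `e q + 1` right after the letter `q` of rank `jump`. -/
lemma IsMaxInsertion.exists_jump_succ (h : IsMaxInsertion m e V p) (hJ : jump m e V p < m) :
    ∃ V' p', IsMaxInsertion m e V' p' ∧ jump m e V' p' = jump m e V p + 1 := by
  obtain ⟨q, hq, hqJ⟩ := exists_rank_eq (key_injective e) hJ
  have hqV : ¬ toLex (e q + 1, q) < toLex (V, p) := by
    rw [lt_iff_rank_lt_jump hq, hqJ]
    exact lt_irrefl _
  refine ⟨e q + 1, q + 1, ⟨by omega, hq, by simp, fun r hr => ?_⟩, ?_⟩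
  · have := h.2.2.2 r hr
    simp only [key, Prod.Lex.toLex_lt_toLex] at this hqV ⊢
    omega
  · rw [← hqJ, ← card_filter_le_eq_rank_add_one (key_injective e) hq, jump]
    congr 1
    ext r
    simp only [mem_filter, mem_range, key, Prod.Lex.toLex_lt_toLex, Prod.Lex.toLex_le_toLex]
    omega

/-- Insert the largest letter of `e` again right after its last occurrence: every letter counted
by the `jump` of this insertion has positive `g`-value. -/
lemma exists_isMaxInsertion_jump_le {J : ℕ} (hm : 1 ≤ m) (hJ : ∀ k, J ≤ k → zeta m e k = 0) :
    ∃ V p, IsMaxInsertion m e V p ∧ jump m e V p ≤ J := by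
  obtain ⟨q, hq, hmax⟩ := exists_max_image (range m) (key e) (nonempty_range_iff.2 (by omega))
  rw [mem_range] at hq
  have hqlt : key e q < toLex (e q, q + 1) := by simp [key, Prod.Lex.toLex_lt_toLex]
  refine ⟨e q, q + 1, ⟨by omega, hq, by simp, fun r hr => (hmax r (mem_range.2 hr)).trans_lt hqlt⟩,
    not_lt.1 fun hlt => ?_⟩
  obtain ⟨s, hs, rfl⟩ := exists_rank_eq (key_injective e) (hlt.trans_le jump_le)
  have hsq := (lt_iff_rank_lt_jump hs).2 hlt
  refine (Nat.pos_iff_ne_zero.1 ?_) ((zeta_rank hs).symm.trans (hJ _ le_rfl))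
  refine card_pos.2 ⟨q, mem_filter.2 ⟨mem_range.2 hq, ?_⟩⟩
  obtain rfl | hsq' := eq_or_ne s q
  · simp [Prod.Lex.toLex_lt_toLex] at hsq
  · simp only [key, Prod.Lex.toLex_lt_toLex] at hsq ⊢
    omega

lemma exists_isMaxInsertion_jump_eq {J : ℕ} (hm : 1 ≤ m) (hJm : J ≤ m)
    (hJ : ∀ k, J ≤ k → zeta m e k = 0) : ∃ V p, IsMaxInsertion m e V p ∧ jump m e V p = J := by
  obtain ⟨V₀, p₀, h₀, hJ₀⟩ := exists_isMaxInsertion_jump_le hm hJ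
  clear hJ
  induction J, hJ₀ using Nat.le_induction with
  | base => exact ⟨V₀, p₀, h₀, rfl⟩
  | succ j _ ih =>
    obtain ⟨V, p, h, rfl⟩ := ih (by omega)
    exact h.exists_jump_succ (by omega)

lemma isAreaWord_one_iff : IsAreaWord 1 c ↔ c = 0 := by
  constructor
  · rintro ⟨hc0, -, hzero⟩
    ext (_ | i)
    exacts [hc0, hzero _ (by omega)]
  · rintro rfl
    exact ⟨rfl, fun i hi => by omega, fun _ _ => rfl⟩

lemma isStaircase_one_iff {l : ℕ → ℕ} : IsStaircase 1 l ↔ l = 0 := by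
  constructor
  · rintro ⟨-, hl⟩
    ext k
    simpa using hl k
  · rintro rfl
    exact ⟨antitone_const, fun _ => Nat.zero_le _⟩

lemma zeta_zero : zeta n 0 = 0 := by
  ext k
  refine sum_eq_zero fun s _ => ?_
  simp [gval, key, Prod.Lex.toLex_lt_toLex]

theorem mapsTo_zeta (hn : 1 ≤ n) :
    Set.MapsTo (zeta n) {c | IsAreaWord n c} {l | IsStaircase n l} := by
  induction n, hn using Nat.le_induction with
  | base =>
    intro c hc
    rw [isAreaWord_one_iff.1 hc, zeta_zero]
    exact isStaircase_one_iff.2 rfl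
  | succ m hm ih =>
    intro c hc
    obtain ⟨e, V, p, he, h, rfl⟩ := exists_isMaxInsertion hc hm
    obtain ⟨hanti, hbound⟩ := ih he
    have hJ : jump m e V p ≤ m := jump_le
    refine ⟨fun i j hij => ?_, fun k => ?_⟩
    · have := hanti hij
      simp only [h.zeta_insertNth]
      split_ifs <;> omega
    · have := hbound k
      simp only [h.zeta_insertNth]
      split_ifs <;> omega

theorem injOn_zeta (hn : 1 ≤ n) : Set.InjOn (zeta n) {c | IsAreaWord n c} := by
  induction n, hn using Nat.le_induction with
  | base =>
    intro c hc d hd _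
    rw [isAreaWord_one_iff.1 hc, isAreaWord_one_iff.1 hd]
  | succ m hm ih =>
    intro c hc d hd hcd
    obtain ⟨e, V, p, he, h, rfl⟩ := exists_isMaxInsertion hc hm
    obtain ⟨e', V', p', he', h', rfl⟩ := exists_isMaxInsertion hd hm
    have hJ : jump m e V p = jump m e' V' p' := eq_of_forall_lt_iff fun k => by
      rw [← h.zeta_insertNth_ne_zero_iff, ← h'.zeta_insertNth_ne_zero_iff, hcd]
    obtain rfl : e = e' := ih he he' <| funext fun k => by
      have := congr_fun hcd k
      rw [h.zeta_insertNth, h'.zeta_insertNth, hJ] at this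
      omega
    obtain ⟨rfl, rfl⟩ := h.eq_of_jump_eq h' hJ
    rfl

theorem surjOn_zeta (hn : 1 ≤ n) :
    Set.SurjOn (zeta n) {c | IsAreaWord n c} {l | IsStaircase n l} := by
  classical
  induction n, hn using Nat.le_induction with
  | base =>
    intro l hl
    exact ⟨0, isAreaWord_one_iff.2 rfl, by rw [zeta_zero, isStaircase_one_iff.1 hl]⟩
  | succ m hm ih =>
    rintro l ⟨hanti, hbound⟩
    -- `l` is `fun k => l k - 1` with a first column of height `Nat.find hex` added.
    have hex : ∃ k, l k = 0 := ⟨m, by have := hbound m; omega⟩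
    have hJ : ∀ k, k < Nat.find hex ↔ l k ≠ 0 := fun k =>
      ⟨fun hk => Nat.find_min hex hk, fun hk => not_le.1 fun hJk =>
        hk (Nat.le_zero.1 ((hanti hJk).trans (Nat.find_spec hex).le))⟩
    obtain ⟨e, he, hle⟩ := ih (show IsStaircase m (fun k => l k - 1) from
      ⟨fun i j hij => Nat.sub_le_sub_right (hanti hij) 1, fun k => by
        show l k - 1 ≤ m - (k + 1)
        have := hbound k
        omega⟩)
    obtain ⟨V, p, h, hJp⟩ := exists_isMaxInsertion_jump_eq (e := e) hm
      (Nat.find_min' hex (by have := hbound m; omega)) fun k hk => by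
        simp [hle, not_ne_iff.1 ((hJ k).not.1 hk.not_gt)]
    refine ⟨insertNth p V e, h.isAreaWord_insertNth he, funext fun k => ?_⟩
    have := hJ k
    rw [h.zeta_insertNth, hle, hJp]
    dsimp only
    split_ifs <;> omega

theorem bijOn_zeta (hn : 1 ≤ n) :
    Set.BijOn (zeta n) {c | IsAreaWord n c} {l | IsStaircase n l} :=
  ⟨mapsTo_zeta hn, injOn_zeta hn, surjOn_zeta hn⟩

section Semimodule

variable {a b : ℕ} {Δ : Set ℕ}

lemma isSemiModule_of_add_mem {p q : ℕ} (h0 : 0 ∈ Δ) (hp : ∀ x ∈ Δ, x + p ∈ Δ)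
    (hq : ∀ x ∈ Δ, x + q ∈ Δ) : IsSemiModule p q Δ := by
  have iterate : ∀ d, (∀ x ∈ Δ, x + d ∈ Δ) → ∀ a, ∀ x ∈ Δ, x + a * d ∈ Δ := by
    intro d hd a
    induction a with
    | zero => simp
    | succ a ih =>
      intro x hx
      rw [add_mul, one_mul, ← add_assoc]
      exact hd _ (ih x hx)
  refine ⟨h0, ?_⟩
  rintro x hx _ ⟨a, b, rfl⟩
  rw [← add_assoc]
  exact iterate q hq b _ (iterate p hp a x hx)

lemma exists_eq_add_mul (hn : 0 < n) (x : ℕ) : ∃ r k, r < n ∧ x = r + n * k :=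
  ⟨x % n, x / n, Nat.mod_lt x hn, (Nat.mod_add_div x n).symm⟩

lemma add_mul_mod_of_lt (hr : r < n) : (r + n * k) % n = r := by
  rw [Nat.add_mul_mod_self_left, Nat.mod_eq_of_lt hr]

lemma add_mul_div_of_lt (hr : r < n) : (r + n * k) / n = k := by
  rw [Nat.add_mul_div_left _ _ (by omega), Nat.div_eq_of_lt hr, zero_add]

lemma add_mul_inj (hr : r < n) (hs : s < n) : r + n * a = s + n * b ↔ r = s ∧ a = b := by
  refine ⟨fun h => ⟨?_, ?_⟩, fun ⟨h₁, h₂⟩ => h₁ ▸ h₂ ▸ rfl⟩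
  · simpa [add_mul_mod_of_lt hr, add_mul_mod_of_lt hs] using congrArg (· % n) h
  · simpa [add_mul_div_of_lt hr, add_mul_div_of_lt hs] using congrArg (· / n) h

lemma add_mul_lt_add_mul_iff (hr : r < n) (hs : s < n) :
    r + n * a < s + n * b ↔ toLex (a, r) < toLex (b, s) := by
  have hmono : ∀ {r s a b}, r < n → a < b → r + n * a < s + n * b := fun hr hab => by
    have := Nat.mul_le_mul_left n (Nat.succ_le_of_lt hab)
    rw [Nat.mul_succ] at this
    omega
  rw [Prod.Lex.toLex_lt_toLex]
  rcases lt_trichotomy a b with hab | rfl | hab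
  · have := hmono (s := s) hr hab
    omega
  · omega
  · have := hmono (s := r) hs hab
    omega

lemma add_mul_le_add_mul_iff (hr : r < n) (hs : s < n) :
    r + n * a ≤ s + n * b ↔ toLex (a, r) ≤ toLex (b, s) := by
  rw [← not_lt, add_mul_lt_add_mul_iff hs hr, not_lt]

def semimoduleOf (n : ℕ) (c : ℕ → ℕ) : Set ℕ := {x | c (x % n) ≤ x / n}

noncomputable def areaWordOf (n : ℕ) (Δ : Set ℕ) (r : ℕ) : ℕ :=
  if r < n then sInf {k | r + n * k ∈ Δ} else 0

lemma add_mul_mem_semimoduleOf (hr : r < n) : r + n * k ∈ semimoduleOf n c ↔ c r ≤ k := by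
  show c _ ≤ _ ↔ _
  rw [add_mul_mod_of_lt hr, add_mul_div_of_lt hr]

lemma isSemiModule_semimoduleOf (hn : 0 < n) (hc : IsAreaWord n c) :
    IsSemiModule n (n + 1) (semimoduleOf n c) := by
  refine isSemiModule_of_add_mem (by simp [semimoduleOf, hc.1]) (fun x hx => ?_) fun x hx => ?_
  all_goals
    obtain ⟨r, k, hr, rfl⟩ := exists_eq_add_mul hn x
    rw [add_mul_mem_semimoduleOf hr] at hx
  · rw [show r + n * k + n = r + n * (k + 1) by ring, add_mul_mem_semimoduleOf hr]
    omega
  · by_cases hr' : r + 1 < n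
    · rw [show r + n * k + (n + 1) = r + 1 + n * (k + 1) by ring, add_mul_mem_semimoduleOf hr']
      have := hc.2.1 r hr'
      omega
    · obtain rfl : n = r + 1 := by omega
      rw [show r + (r + 1) * k + (r + 1 + 1) = 0 + (r + 1) * (k + 2) by ring,
        add_mul_mem_semimoduleOf hn, hc.1]
      omega

lemma add_mul_mem_iff_areaWordOf_le (hΔ : IsSemiModule n (n + 1) Δ) (hr : r < n) :
    r + n * k ∈ Δ ↔ areaWordOf n Δ r ≤ k := by
  rw [areaWordOf, if_pos hr]
  have hne : {k | r + n * k ∈ Δ}.Nonempty := by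
    refine ⟨r, ?_⟩
    have := hΔ.2 0 hΔ.1 (r * (n + 1)) ⟨0, r, by ring⟩
    rwa [show 0 + r * (n + 1) = r + n * r by ring] at this
  refine ⟨fun hk => Nat.sInf_le hk, fun hk => ?_⟩
  obtain ⟨d, rfl⟩ := Nat.exists_eq_add_of_le hk
  have := hΔ.2 (r + n * sInf {k | r + n * k ∈ Δ}) (Nat.sInf_mem hne) (d * n) ⟨d, 0, by ring⟩
  rwa [add_assoc, mul_comm d n, ← mul_add] at this

lemma semimoduleOf_areaWordOf (hn : 0 < n) (hΔ : IsSemiModule n (n + 1) Δ) :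
    semimoduleOf n (areaWordOf n Δ) = Δ := by
  ext x
  obtain ⟨r, k, hr, rfl⟩ := exists_eq_add_mul hn x
  rw [add_mul_mem_semimoduleOf hr, add_mul_mem_iff_areaWordOf_le hΔ hr]

lemma areaWordOf_semimoduleOf (hc : IsAreaWord n c) : areaWordOf n (semimoduleOf n c) = c := by
  ext r
  rw [areaWordOf]
  split_ifs with hr
  · simp_rw [add_mul_mem_semimoduleOf hr]
    exact csInf_Ici
  · exact (hc.2.2 r (not_lt.1 hr)).symm

lemma isAreaWord_areaWordOf (hn : 0 < n) (hΔ : IsSemiModule n (n + 1) Δ) :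
    IsAreaWord n (areaWordOf n Δ) := by
  refine ⟨Nat.le_zero.1 ((add_mul_mem_iff_areaWordOf_le hΔ hn).1 (by simpa using hΔ.1)),
    fun i hi => (add_mul_mem_iff_areaWordOf_le hΔ hi).1 ?_, fun i hi => if_neg (not_lt.2 hi)⟩
  have := hΔ.2 _ ((add_mul_mem_iff_areaWordOf_le hΔ (by omega : i < n)).2 le_rfl) (n + 1)
    ⟨0, 1, by ring⟩
  rwa [show i + n * areaWordOf n Δ i + (n + 1) = i + 1 + n * (areaWordOf n Δ i + 1) by ring] at this

lemma bijOn_areaWordOf (hn : 0 < n) :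
    Set.BijOn (areaWordOf n) {Δ | IsSemiModule n (n + 1) Δ} {c | IsAreaWord n c} :=
  Set.InvOn.bijOn
    ⟨fun _ hΔ => semimoduleOf_areaWordOf hn hΔ, fun _ hc => areaWordOf_semimoduleOf hc⟩
    (fun _ hΔ => isAreaWord_areaWordOf hn hΔ) fun _ hc => isSemiModule_semimoduleOf hn hc

lemma add_mul_mem_pBasis_iff (hn : 0 < n) (hr : r < n) :
    r + n * k ∈ pBasis n (semimoduleOf n c) ↔ c r = k := by
  simp only [pBasis, Set.mem_sdiff, Set.mem_image, add_mul_mem_semimoduleOf hr]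
  constructor
  · rintro ⟨hk, hprev⟩
    by_contra hne
    obtain ⟨k, rfl⟩ : ∃ k', k = k' + 1 := ⟨k - 1, by omega⟩
    exact hprev ⟨r + n * k, (add_mul_mem_semimoduleOf hr).2 (by omega), by ring⟩
  · rintro rfl
    refine ⟨le_rfl, ?_⟩
    rintro ⟨y, hy, hyx⟩
    obtain ⟨s, j, hs, rfl⟩ := exists_eq_add_mul hn y
    rw [add_mul_mem_semimoduleOf hs] at hy
    rw [show s + n * j + n = s + n * (j + 1) by ring, add_mul_inj hs hr] at hyx
    obtain ⟨rfl, hj⟩ := hyx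
    omega

lemma count_pBasis [DecidablePred (· ∈ pBasis n (semimoduleOf n c))] (hn : 0 < n) (hs : s < n) :
    Nat.count (· ∈ pBasis n (semimoduleOf n c)) (s + n * c s) = rank n (key c) s := by
  rw [Nat.count_eq_card_filter_range, rank, eq_comm]
  refine card_bij (fun r _ => r + n * c r) (fun r hr => ?_) (fun r₁ hr₁ r₂ hr₂ h => ?_)
    fun x hx => ?_
  · simp only [mem_filter, mem_range] at hr ⊢
    exact ⟨(add_mul_lt_add_mul_iff hr.1 hs).2 hr.2, (add_mul_mem_pBasis_iff hn hr.1).2 rfl⟩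
  · simp only [mem_filter, mem_range] at hr₁ hr₂
    exact ((add_mul_inj hr₁.1 hr₂.1).1 h).1
  · simp only [mem_filter, mem_range] at hx
    obtain ⟨r, k, hr, rfl⟩ := exists_eq_add_mul hn x
    obtain rfl := (add_mul_mem_pBasis_iff hn hr).1 hx.2
    exact ⟨r, mem_filter.2 ⟨mem_range.2 hr, (add_mul_lt_add_mul_iff hr hs).1 hx.1⟩, rfl⟩

lemma nth_pBasis_rank (hn : 0 < n) (hs : s < n) :
    Nat.nth (· ∈ pBasis n (semimoduleOf n c)) (rank n (key c) s) = s + n * c s := by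
  classical
  rw [← count_pBasis hn hs]
  exact Nat.nth_count ((add_mul_mem_pBasis_iff hn hs).2 rfl)

lemma add_mul_mem_Ico_diff_iff (hr : r < n) (hs : s < n) :
    r + n * k ∈ Set.Ico (s + n * c s) (s + n * c s + (n + 1)) \ semimoduleOf n c ↔
      toLex (c s, s) ≤ toLex (k, r) ∧ toLex (k, r) ≤ toLex (c s + 1, s) ∧ k < c r := by
  rw [Set.mem_sdiff, Set.mem_Ico, add_mul_mem_semimoduleOf hr, not_le,
    show s + n * c s + (n + 1) = s + n * (c s + 1) + 1 by ring, Nat.lt_add_one_iff,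
    add_mul_le_add_mul_iff hs hr, add_mul_le_add_mul_iff hr hs, and_assoc]

lemma gInt_semimoduleOf (hn : 0 < n) (hs : s < n) :
    gInt (n + 1) (semimoduleOf n c) (s + n * c s) = gval n c s := by
  rw [gInt, gval, ← Set.ncard_coe_finset]
  -- Each residue class meets the window once, except that of `s`, which meets it at both ends;
  -- these two lie in the semimodule.
  refine Set.ncard_congr (fun x _ => x % n) (fun x hx => ?_) (fun x y hx hy hxy => ?_)
    fun r hr => ?_
  · obtain ⟨r, k, hr, rfl⟩ := exists_eq_add_mul hn x
    rw [add_mul_mem_Ico_diff_iff hr hs] at hx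
    rw [add_mul_mod_of_lt hr, mem_coe, mem_filter, mem_range]
    simp only [key, Prod.Lex.toLex_le_toLex, Prod.Lex.toLex_lt_toLex] at hx ⊢
    obtain rfl | hrs := eq_or_ne r s <;> omega
  · obtain ⟨r, k, hr, rfl⟩ := exists_eq_add_mul hn x
    obtain ⟨r', k', hr', rfl⟩ := exists_eq_add_mul hn y
    rw [add_mul_mem_Ico_diff_iff hr hs] at hx
    rw [add_mul_mem_Ico_diff_iff hr' hs] at hy
    simp only [add_mul_mod_of_lt hr, add_mul_mod_of_lt hr'] at hxy
    subst hxy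
    simp only [Prod.Lex.toLex_le_toLex] at hx hy
    rw [add_mul_inj hr hr]
    obtain rfl | hrs := eq_or_ne r s <;> omega
  · rw [mem_coe, mem_filter, mem_range] at hr
    refine ⟨r + n * (if s < r then c s else c s + 1), ?_, add_mul_mod_of_lt hr.1⟩
    rw [add_mul_mem_Ico_diff_iff hr.1 hs]
    simp only [key, Prod.Lex.toLex_le_toLex, Prod.Lex.toLex_lt_toLex] at hr ⊢
    obtain rfl | hrs := eq_or_ne r s
    · omega
    · split_ifs <;> omega

lemma gSeq_semimoduleOf (hn : 0 < n) (k : Fin n) :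
    gSeq n (semimoduleOf n c) k = zeta n c k := by
  obtain ⟨s, hs, hsk⟩ := exists_rank_eq (key_injective c) k.2
  rw [gSeq, ← hsk, nth_pBasis_rank hn hs, gInt_semimoduleOf hn hs, zeta_rank hs]

end Semimodule

lemma bijOn_restrict_isStaircase :
    Set.BijOn (fun (l : ℕ → ℕ) (k : Fin n) => l k) {l | IsStaircase n l}
      {l : Fin n → ℕ | Antitone l ∧ ∀ k : Fin n, l k ≤ n - ((k : ℕ) + 1)} := by
  refine ⟨fun l hl => ⟨hl.1.comp_monotone fun _ _ h => h, fun k => hl.2 k⟩,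
    fun l hl l' hl' h => funext fun k => ?_, fun L hL => ?_⟩
  · by_cases hk : k < n
    · exact congr_fun h ⟨k, hk⟩
    · have := hl.2 k
      have := hl'.2 k
      omega
  · refine ⟨fun k => if hk : k < n then L ⟨k, hk⟩ else 0, ⟨fun i j hij => ?_, fun k => ?_⟩,
      funext fun k => dif_pos k.2⟩
    · dsimp only
      split_ifs with hj hi
      · exact hL.1 (Fin.mk_le_mk.2 hij)
      · omega
      · exact Nat.zero_le _
      · exact le_rfl
    · dsimp only
      split_ifs with hk
      · exact hL.2 ⟨k, hk⟩
      · exact Nat.zero_le _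

end AreaWord

/-- `Δ ↦ (g(a_0), …, g(a_{n-1}))` is a bijection from the `0`-normalized
`Γ^{n,n+1}`-semi-modules onto the weakly decreasing sequences `λ_1 ≥ … ≥ λ_n ≥ 0` with
`λ_k ≤ n - k` (Young diagrams in the staircase `(n-1, …, 1, 0)`); in particular the
sequence is always weakly decreasing. -/
theorem stmt_12 (n : ℕ) (hn : 1 ≤ n) :
    Set.BijOn (gSeq n) {Δ | IsSemiModule n (n + 1) Δ}
      {l : Fin n → ℕ | Antitone l ∧ ∀ k : Fin n, l k ≤ n - ((k : ℕ) + 1)} ∧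
    ∀ Δ : Set ℕ, IsSemiModule n (n + 1) Δ → Antitone (gSeq n Δ) := by
  have hbij := AreaWord.bijOn_restrict_isStaircase.comp
    ((AreaWord.bijOn_zeta hn).comp (AreaWord.bijOn_areaWordOf hn))
  have hgSeq : Set.BijOn (gSeq n) {Δ | IsSemiModule n (n + 1) Δ} _ :=
    hbij.congr fun Δ hΔ => funext fun k => by
      conv_rhs => rw [← AreaWord.semimoduleOf_areaWordOf hn hΔ]
      exact (AreaWord.gSeq_semimoduleOf hn k).symm
  exact ⟨hgSeq, fun Δ hΔ => (hgSeq.mapsTo hΔ).1⟩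
end

section
/- Let p and q be coprime positive integers, Δ a 0-normalized Γ^{p,q}-semi-module, and D = D(Δ) the associated Young diagram in R_+^{p,q}. Then the number of pairs (a, b), where a is a p-generator of Δ, b is a q-cogenerator of Δ, and a < b, equals |{c ∈ R^{p,q} \ D : a(c)·q > (l(c)+1)·p}| + |{c ∈ D : (a(c)+1)·q < l(c)·p}|. -/
/-- The Young diagram `D(Δ)`: boxes of `R_+^{p,q}` whose label lies in `Δ`. -/
def diagD (p q : ℕ) (Δ : Set ℕ) : Set (ℕ × ℕ) :=
  {c | c ∈ Rplus p q ∧ boxLabel p q c ∈ Δ}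

/-- The arm of a box `c` of a Young diagram `D`: `a(c) = #{x' > x : (x',y) ∈ D}`. -/
noncomputable def arm (D : Set (ℕ × ℕ)) (c : ℕ × ℕ) : ℕ :=
  {x' : ℕ | c.1 < x' ∧ (x', c.2) ∈ D}.ncard

/-- The leg of a box `c` of a Young diagram `D`: `l(c) = #{y' > y : (x,y') ∈ D}`. -/
noncomputable def leg (D : Set (ℕ × ℕ)) (c : ℕ × ℕ) : ℕ :=
  {y' : ℕ | c.2 < y' ∧ (c.1, y') ∈ D}.ncard

/-- The height of column `x` of `D`. -/
noncomputable def colHeight (D : Set (ℕ × ℕ)) (x : ℕ) : ℕ := {y : ℕ | (x, y) ∈ D}.ncard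

/-- The length of row `y` of `D`. -/
noncomputable def rowLen (D : Set (ℕ × ℕ)) (y : ℕ) : ℕ := {x : ℕ | (x, y) ∈ D}.ncard

/-- The leg of a box `c = (x,y)` of `R^{p,q}` not in `D`:
`l(c) = y - 1 - (height of column x of D)`. -/
noncomputable def legOut (D : Set (ℕ × ℕ)) (c : ℕ × ℕ) : ℕ := c.2 - 1 - colHeight D c.1

/-- The arm of a box `c = (x,y)` of `R^{p,q}` not in `D`:
`a(c) = x - 1 - (length of row y of D)`. -/
noncomputable def armOut (D : Set (ℕ × ℕ)) (c : ℕ × ℕ) : ℕ := c.1 - 1 - rowLen D c.2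

/-!
For `1 ≤ x ≤ p` let `a_x` be the least element of `Δ` congruent to `q (p - x)` modulo `p`, the
residue class of the labels of column `x`. As `p` and `q` are coprime these are exactly the
`p`-generators, and column `x` of `D(Δ)` has height `h_x` with `a_x + p h_x = q (p - x)`.
Symmetrically the `q`-cogenerators are `b_y = a'_y - q` for `1 ≤ y ≤ q`, with
`a'_y + q r_y = p (q - y)` where `r_y` is the length of row `y`. Hence `a_x < b_y` is the linear
inequality `q r_y + q + p y < q x + p h_x`, which reads `a(c) q > (l(c) + 1) p` for a box
`c = (x, y)` outside `D(Δ)` and `(a(c) + 1) q < l(c) p` for a box inside. So `(x, y) ↦ (a_x, b_y)`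
is a bijection from the boxes satisfying it onto the counted pairs.
-/

lemma Gamma_comm (p q : ℕ) : Gamma p q = Gamma q p := by
  ext n
  exact ⟨fun ⟨a, b, h⟩ => ⟨b, a, by rw [h, add_comm]⟩,
    fun ⟨a, b, h⟩ => ⟨b, a, by rw [h, add_comm]⟩⟩

lemma Nat.exists_mem_Icc_modEq_mul_sub {p : ℕ} (q : ℕ) (hp : 0 < p) (hpq : p.Coprime q)
    (n : ℕ) : ∃ x ∈ Set.Icc 1 p, n ≡ q * (p - x) [MOD p] := by
  have : NeZero p := ⟨hp.ne'⟩
  set k := ((n : ZMod p) * (q : ZMod p)⁻¹).val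
  have hk : k < p := ZMod.val_lt _
  refine ⟨p - k, ⟨by omega, by omega⟩, ?_⟩
  rw [Nat.sub_sub_self hk.le, ← ZMod.natCast_eq_natCast_iff]
  push_cast
  rw [ZMod.natCast_zmod_val, mul_left_comm, ZMod.coe_mul_inv_eq_one q hpq.symm, mul_one]

lemma Nat.eq_of_mul_sub_modEq {p q x x' : ℕ} (hpq : p.Coprime q) (hx : x ∈ Set.Icc 1 p)
    (hx' : x' ∈ Set.Icc 1 p) (h : q * (p - x) ≡ q * (p - x') [MOD p]) : x = x' := by
  obtain ⟨hx1, hxp⟩ := hx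
  obtain ⟨hx1', hxp'⟩ := hx'
  have := (h.cancel_left_of_coprime hpq).eq_of_lt_of_lt (by omega) (by omega)
  omega

/-- The labels of column `x` of `R^{p,q}` are congruent to `q (p - x)` modulo `p`; `colGen` is
the least element of `Δ` in that class, the `p`-generator attached to column `x`. -/
noncomputable def colGen (p q : ℕ) (Δ : Set ℕ) (x : ℕ) : ℕ :=
  sInf {n | n ∈ Δ ∧ n ≡ q * (p - x) [MOD p]}

noncomputable def colHt (p q : ℕ) (Δ : Set ℕ) (x : ℕ) : ℕ :=
  (q * (p - x) - colGen p q Δ x) / p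

lemma colGen_le_of_mem {p q x n : ℕ} {Δ : Set ℕ} (hn : n ∈ Δ)
    (h : n ≡ q * (p - x) [MOD p]) : colGen p q Δ x ≤ n :=
  Nat.sInf_le ⟨hn, h⟩

namespace IsSemiModule

variable {p q : ℕ} {Δ : Set ℕ} (hΔ : IsSemiModule p q Δ)
include hΔ

lemma symm : IsSemiModule q p Δ := by
  rw [IsSemiModule, ← Gamma_comm]
  exact hΔ

lemma add_mul_mem {n : ℕ} (hn : n ∈ Δ) (k : ℕ) : n + p * k ∈ Δ :=
  hΔ.2 n hn _ ⟨k, 0, by ring⟩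

lemma mul_mem (k : ℕ) : q * k ∈ Δ := by
  simpa using hΔ.symm.add_mul_mem hΔ.1 k

lemma mem_of_modEq {a b : ℕ} (ha : a ∈ Δ) (hab : a ≤ b) (h : a ≡ b [MOD p]) : b ∈ Δ := by
  obtain ⟨k, rfl⟩ := (Nat.modEq_iff_exists_eq_add hab).mp h
  exact hΔ.add_mul_mem ha k

lemma colGen_mem_modEq (x : ℕ) :
    colGen p q Δ x ∈ Δ ∧ colGen p q Δ x ≡ q * (p - x) [MOD p] :=
  Nat.sInf_mem (s := {n | n ∈ Δ ∧ n ≡ q * (p - x) [MOD p]}) ⟨_, hΔ.mul_mem _, rfl⟩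

lemma mem_iff_colGen_le {n x : ℕ} (h : n ≡ q * (p - x) [MOD p]) :
    n ∈ Δ ↔ colGen p q Δ x ≤ n :=
  ⟨fun hn => colGen_le_of_mem hn h, fun hle =>
    hΔ.mem_of_modEq (hΔ.colGen_mem_modEq x).1 hle ((hΔ.colGen_mem_modEq x).2.trans h.symm)⟩

lemma colGen_add_mul_colHt (x : ℕ) : colGen p q Δ x + p * colHt p q Δ x = q * (p - x) := by
  have hle := colGen_le_of_mem (hΔ.mul_mem (p - x)) rfl
  have hdvd := (Nat.modEq_iff_dvd' hle).mp (hΔ.colGen_mem_modEq x).2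
  rw [colHt, Nat.mul_div_cancel' hdvd]
  omega

lemma colGen_add_lt_colGen_iff {x y : ℕ} (hx : x ≤ p) (hy : y ≤ q) :
    colGen p q Δ x + q < colGen q p Δ y ↔
      q * colHt q p Δ y + q + p * y < q * x + p * colHt p q Δ x := by
  have hcol := hΔ.colGen_add_mul_colHt x
  have hrow := hΔ.symm.colGen_add_mul_colHt y
  zify [hx, hy] at hcol hrow ⊢
  constructor <;> intro <;> linarith

end IsSemiModule

lemma Rbox_eq (p q : ℕ) : Rbox p q = Set.Icc 1 p ×ˢ Set.Icc 1 q := by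
  ext ⟨x, y⟩
  simp only [Rbox, Set.mem_ofPred_eq, Set.mem_prod, Set.mem_Icc, and_assoc]

lemma mem_diagD_comm {p q x y : ℕ} {Δ : Set ℕ} :
    (x, y) ∈ diagD p q Δ ↔ (y, x) ∈ diagD q p Δ := by
  simp only [diagD, Rplus, boxLabel, Set.mem_ofPred_eq, Nat.mul_comm q p, Nat.add_comm (p * y)]
  tauto

lemma diagD_subset_Rbox {p q : ℕ} {Δ : Set ℕ} : diagD p q Δ ⊆ Rbox p q := by
  rintro ⟨x, y⟩ ⟨⟨hx, hy, hlt⟩, -⟩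
  refine ⟨hx, ?_, hy, ?_⟩ <;> nlinarith

lemma rowLen_diagD_eq_colHeight {p q y : ℕ} {Δ : Set ℕ} :
    rowLen (diagD p q Δ) y = colHeight (diagD q p Δ) y := by
  unfold rowLen colHeight
  congr 1
  ext x
  exact mem_diagD_comm

lemma arm_diagD_eq_leg {p q x y : ℕ} {Δ : Set ℕ} :
    arm (diagD p q Δ) (x, y) = leg (diagD q p Δ) (y, x) := by
  unfold arm leg
  congr 1
  ext x'
  exact and_congr_right fun _ => mem_diagD_comm

lemma qCogen_eq_image_pBasis (q : ℕ) (Δ : Set ℕ) :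
    qCogen q Δ = (fun n : ℕ => (n : ℤ) - q) '' pBasis q Δ := by
  ext b
  constructor
  · rintro ⟨hb, n, hn, hnb⟩
    refine ⟨n, ⟨hn, fun ⟨d, hd, hdn⟩ => hb ⟨d, hd, ?_⟩⟩, show (n : ℤ) - q = b by omega⟩
    simp only at hdn
    omega
  · rintro ⟨n, ⟨hn, hnp⟩, rfl⟩
    refine ⟨fun ⟨d, hd, hdn⟩ => hnp ⟨d, hd, ?_⟩, n, hn, by ring⟩
    simp only at hdn ⊢
    omega

/-- The boxes `(x, y)` for which the `p`-generator of column `x` is smaller than the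
`q`-cogenerator `colGen q p Δ y - q` of row `y`. -/
def genLtCogenBoxes (p q : ℕ) (Δ : Set ℕ) : Set (ℕ × ℕ) :=
  {c | c ∈ Rbox p q ∧ colGen p q Δ c.1 + q < colGen q p Δ c.2}

namespace IsSemiModule

variable {p q : ℕ} {Δ : Set ℕ} (hΔ : IsSemiModule p q Δ) (hpq : p.Coprime q)
include hΔ hpq

lemma colGen_injOn : Set.InjOn (colGen p q Δ) (Set.Icc 1 p) := fun x hx x' hx' h =>
  Nat.eq_of_mul_sub_modEq hpq hx hx' <|
    (hΔ.colGen_mem_modEq x).2.symm.trans (h ▸ (hΔ.colGen_mem_modEq x').2)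

lemma pBasis_eq_image (hp : 0 < p) : pBasis p Δ = colGen p q Δ '' Set.Icc 1 p := by
  ext a
  constructor
  · rintro ⟨ha, hna⟩
    obtain ⟨x, hx, hax⟩ := Nat.exists_mem_Icc_modEq_mul_sub q hp hpq a
    obtain ⟨hgen, hgenx⟩ := hΔ.colGen_mem_modEq x
    refine ⟨x, hx, (colGen_le_of_mem ha hax).antisymm (not_lt.1 fun hlt => hna ?_)⟩
    have hadd := (hgenx.trans hax.symm).add_le_of_lt hlt
    have hsub : a - p + p = a := by omega
    refine ⟨a - p, hΔ.mem_of_modEq hgen (by omega) ?_, hsub⟩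
    have hap : a - p + p ≡ a - p [MOD p] := Nat.add_modEq_right
    rw [hsub] at hap
    exact hgenx.trans (hax.symm.trans hap)
  · rintro ⟨x, -, rfl⟩
    obtain ⟨hgen, hgenx⟩ := hΔ.colGen_mem_modEq x
    refine ⟨hgen, fun ⟨d, hd, hdp⟩ => ?_⟩
    have hdx : d ≡ q * (p - x) [MOD p] :=
      Nat.add_modEq_right.symm.trans ((congrArg (· ≡ _ [MOD p]) hdp).mpr hgenx)
    have := colGen_le_of_mem hd hdx
    simp only at hdp
    omega

lemma mem_diagD_iff {x y : ℕ} (hx : x ∈ Set.Icc 1 p) (hy : 1 ≤ y) :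
    (x, y) ∈ diagD p q Δ ↔ y ≤ colHt p q Δ x := by
  have hp : 0 < p := hx.1.trans hx.2
  have hid := hΔ.colGen_add_mul_colHt x
  have hqpx : q * (p - x) + q * x = p * q := by
    rw [← Nat.mul_add, Nat.sub_add_cancel hx.2, Nat.mul_comm]
  have hpy : 0 < p * y := Nat.mul_pos hp hy
  have hlabel : p * q - (q * x + p * y) = q * (p - x) - p * y := by omega
  have label_modEq (h : p * y ≤ q * (p - x)) : q * (p - x) - p * y ≡ q * (p - x) [MOD p] :=
    (Nat.modEq_iff_dvd' (Nat.sub_le _ _)).mpr ⟨y, by omega⟩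
  simp only [diagD, Rplus, boxLabel, Set.mem_ofPred_eq, hlabel]
  constructor
  · rintro ⟨⟨-, -, hlt⟩, hmem⟩
    have := (hΔ.mem_iff_colGen_le (label_modEq (by omega))).mp hmem
    exact Nat.le_of_mul_le_mul_left (c := p) (by omega) hp
  · intro hyh
    have := Nat.mul_le_mul_left p hyh
    refine ⟨⟨hx.1, hy, ?_⟩, (hΔ.mem_iff_colGen_le (label_modEq (by omega))).mpr (by omega)⟩
    by_contra! hge
    -- a zero label forces `colGen p q Δ x = 0 ≡ q * (p - p)`, hence `x = p`
    have hgen0 : colGen p q Δ x = 0 := by omega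
    have hxp : p = x := Nat.eq_of_mul_sub_modEq hpq ⟨hp, le_rfl⟩ hx
      (by simpa [hgen0] using (hΔ.colGen_mem_modEq x).2)
    have : q * (p - x) = 0 := by rw [← hxp, Nat.sub_self, Nat.mul_zero]
    omega

lemma colHeight_diagD {x : ℕ} (hx : x ∈ Set.Icc 1 p) :
    colHeight (diagD p q Δ) x = colHt p q Δ x := by
  have hcol : {y | (x, y) ∈ diagD p q Δ} = Set.Icc 1 (colHt p q Δ x) := by
    ext y
    exact ⟨fun h => ⟨h.1.2.1, (hΔ.mem_diagD_iff hpq hx h.1.2.1).mp h⟩,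
      fun h => (hΔ.mem_diagD_iff hpq hx h.1).mpr h.2⟩
  rw [colHeight, hcol, Set.ncard_Icc_nat, Nat.add_sub_cancel]

lemma leg_diagD {x y : ℕ} (hx : x ∈ Set.Icc 1 p) :
    leg (diagD p q Δ) (x, y) = colHt p q Δ x - y := by
  have hcol : {y' | y < y' ∧ (x, y') ∈ diagD p q Δ} = Set.Ioc y (colHt p q Δ x) := by
    ext y'
    exact and_congr_right fun h => hΔ.mem_diagD_iff hpq hx (by omega)
  rw [leg, hcol, Set.ncard_Ioc_nat]

lemma mem_genLtCogenBoxes_iff_of_notMem {c : ℕ × ℕ} (hc : c ∈ Rbox p q)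
    (hcD : c ∉ diagD p q Δ) :
    c ∈ genLtCogenBoxes p q Δ ↔
      armOut (diagD p q Δ) c * q > (legOut (diagD p q Δ) c + 1) * p := by
  obtain ⟨x, y⟩ := c
  obtain ⟨hx, hy⟩ : x ∈ Set.Icc 1 p ∧ y ∈ Set.Icc 1 q := by rwa [Rbox_eq] at hc
  have hcol : colHt p q Δ x < y :=
    not_le.mp fun h => hcD ((hΔ.mem_diagD_iff hpq hx hy.1).mpr h)
  have hrow : colHt q p Δ y < x :=
    not_le.mp fun h => hcD (mem_diagD_comm.mpr ((hΔ.symm.mem_diagD_iff hpq.symm hy hx.1).mpr h))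
  rw [armOut, legOut, rowLen_diagD_eq_colHeight, hΔ.symm.colHeight_diagD hpq.symm hy,
    hΔ.colHeight_diagD hpq hx, genLtCogenBoxes, Set.mem_ofPred_eq, Rbox_eq,
    hΔ.colGen_add_lt_colGen_iff hx.2 hy.2]
  simp only [Set.mem_prod, hx, hy, true_and, gt_iff_lt]
  zify [hx.1, hy.1, Nat.le_sub_one_of_lt hcol, Nat.le_sub_one_of_lt hrow]
  constructor <;> intro <;> linarith

lemma mem_genLtCogenBoxes_iff_of_mem {c : ℕ × ℕ} (hcD : c ∈ diagD p q Δ) :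
    c ∈ genLtCogenBoxes p q Δ ↔
      (arm (diagD p q Δ) c + 1) * q < leg (diagD p q Δ) c * p := by
  obtain ⟨x, y⟩ := c
  obtain ⟨hx, hy⟩ : x ∈ Set.Icc 1 p ∧ y ∈ Set.Icc 1 q := by
    simpa only [Rbox_eq, Set.mem_prod] using diagD_subset_Rbox hcD
  have hcol : y ≤ colHt p q Δ x := (hΔ.mem_diagD_iff hpq hx hy.1).mp hcD
  have hrow : x ≤ colHt q p Δ y :=
    (hΔ.symm.mem_diagD_iff hpq.symm hy hx.1).mp (mem_diagD_comm.mp hcD)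
  rw [arm_diagD_eq_leg, hΔ.symm.leg_diagD hpq.symm hy, hΔ.leg_diagD hpq hx, genLtCogenBoxes,
    Set.mem_ofPred_eq, Rbox_eq, hΔ.colGen_add_lt_colGen_iff hx.2 hy.2]
  simp only [Set.mem_prod, hx, hy, true_and]
  zify [hcol, hrow]
  constructor <;> intro <;> linarith

lemma pairs_eq_image (hp : 0 < p) (hq : 0 < q) :
    {ab : ℕ × ℤ | ab.1 ∈ pBasis p Δ ∧ ab.2 ∈ qCogen q Δ ∧ (ab.1 : ℤ) < ab.2} =
      (fun c : ℕ × ℕ => (colGen p q Δ c.1, (colGen q p Δ c.2 : ℤ) - q)) ''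
        genLtCogenBoxes p q Δ := by
  rw [qCogen_eq_image_pBasis, hΔ.pBasis_eq_image hpq hp, hΔ.symm.pBasis_eq_image hpq.symm hq]
  ext ⟨a, b⟩
  simp only [Set.mem_ofPred_eq, Set.mem_image, genLtCogenBoxes, Rbox_eq, Set.mem_prod,
    Prod.exists, Prod.mk.injEq]
  constructor
  · rintro ⟨⟨x, hx, rfl⟩, ⟨_, ⟨y, hy, rfl⟩, rfl⟩, hlt⟩
    exact ⟨x, y, ⟨⟨hx, hy⟩, by omega⟩, rfl, rfl⟩
  · rintro ⟨x, y, ⟨⟨hx, hy⟩, hlt⟩, rfl, rfl⟩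
    exact ⟨⟨x, hx, rfl⟩, ⟨_, ⟨y, hy, rfl⟩, rfl⟩, by omega⟩

lemma injOn_genLtCogenBoxes :
    Set.InjOn (fun c : ℕ × ℕ => (colGen p q Δ c.1, (colGen q p Δ c.2 : ℤ) - q))
      (genLtCogenBoxes p q Δ) := by
  have hrow : Set.InjOn (fun y => (colGen q p Δ y : ℤ) - q) (Set.Icc 1 q) :=
    fun y hy y' hy' h => hΔ.symm.colGen_injOn hpq.symm hy hy' (by simpa using h)
  exact ((hΔ.colGen_injOn hpq).prodMap hrow).mono fun c hc => Rbox_eq p q ▸ hc.1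

end IsSemiModule

/-- the number of pairs `(a, b)` with `a` a `p`-generator, `b` a
`q`-cogenerator and `a < b` equals
`|{c ∈ R \ D : a(c)q > (l(c)+1)p}| + |{c ∈ D : (a(c)+1)q < l(c)p}|` for `D = D(Δ)`. -/
theorem stmt_14 (p q : ℕ) (hp : 0 < p) (hq : 0 < q) (hpq : Nat.Coprime p q)
    (Δ : Set ℕ) (hΔ : IsSemiModule p q Δ) :
    {ab : ℕ × ℤ | ab.1 ∈ pBasis p Δ ∧ ab.2 ∈ qCogen q Δ ∧ (ab.1 : ℤ) < ab.2}.ncard =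
      {c | c ∈ Rbox p q ∧ c ∉ diagD p q Δ ∧
        armOut (diagD p q Δ) c * q > (legOut (diagD p q Δ) c + 1) * p}.ncard +
      {c | c ∈ diagD p q Δ ∧
        (arm (diagD p q Δ) c + 1) * q < leg (diagD p q Δ) c * p}.ncard := by
  set D := diagD p q Δ
  set S := genLtCogenBoxes p q Δ
  have hS : S.Finite :=
    ((Set.finite_Icc 1 p).prod (Set.finite_Icc 1 q)).subset fun c hc => Rbox_eq p q ▸ hc.1
  have hout : {c | c ∈ Rbox p q ∧ c ∉ D ∧ armOut D c * q > (legOut D c + 1) * p} = S \ D :=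
    Set.ext fun c => ⟨fun ⟨hc, hcD, h⟩ =>
      ⟨(hΔ.mem_genLtCogenBoxes_iff_of_notMem hpq hc hcD).mpr h, hcD⟩,
      fun ⟨hcS, hcD⟩ =>
        ⟨hcS.1, hcD, (hΔ.mem_genLtCogenBoxes_iff_of_notMem hpq hcS.1 hcD).mp hcS⟩⟩
  have hin : {c | c ∈ D ∧ (arm D c + 1) * q < leg D c * p} = S ∩ D :=
    Set.ext fun c => ⟨fun ⟨hcD, h⟩ => ⟨(hΔ.mem_genLtCogenBoxes_iff_of_mem hpq hcD).mpr h, hcD⟩,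
      fun ⟨hcS, hcD⟩ => ⟨hcD, (hΔ.mem_genLtCogenBoxes_iff_of_mem hpq hcD).mp hcS⟩⟩
  rw [hΔ.pairs_eq_image hpq hp hq, (hΔ.injOn_genLtCogenBoxes hpq).ncard_image,
    hout, hin, add_comm, Set.ncard_inter_add_ncard_sdiff_eq_ncard S D hS]
end

section
/- Let n ≥ 1 and let Δ be a 0-normalized Γ^{n,n+1}-semi-module with n-basis 0 = a_0 < a_1 < … < a_{n-1}. Then for every j with 0 ≤ j ≤ n−1, the number of indices i ∈ {0, …, n−1} with a_i < a_j + n equals n − g(a_j). -/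
open Set

lemma IsSemiModule.add_left_mem {p q : ℕ} {Δ : Set ℕ} (hΔ : IsSemiModule p q Δ) {x : ℕ}
    (hx : x ∈ Δ) : x + p ∈ Δ :=
  hΔ.2 x hx p ⟨1, 0, by ring⟩

lemma pBasis_inter_Iio_add (p c : ℕ) (Δ : Set ℕ) :
    pBasis p Δ ∩ Iio (c + p) = (Δ ∩ Iio (c + p)) \ (· + p) '' (Δ ∩ Iio c) := by
  ext x
  simp only [pBasis, mem_inter_iff, mem_sdiff, mem_image, mem_Iio]
  grind

lemma ncard_pBasis_inter_Iio_add {p : ℕ} {Δ : Set ℕ} (hΔ : ∀ x ∈ Δ, x + p ∈ Δ) (c : ℕ) :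
    (pBasis p Δ ∩ Iio (c + p)).ncard = (Ico c (c + p) ∩ Δ).ncard := by
  have hshift : (· + p) '' (Δ ∩ Iio c) ⊆ Δ ∩ Iio (c + p) := by
    rintro _ ⟨x, ⟨hx, hxc⟩, rfl⟩
    exact ⟨hΔ x hx, by simpa using hxc⟩
  have hwindow : Ico c (c + p) ∩ Δ = (Δ ∩ Iio (c + p)) \ (Δ ∩ Iio c) := by
    ext x
    simp only [mem_inter_iff, mem_sdiff, mem_Ico, mem_Iio]
    grind
  have hfin : (Δ ∩ Iio c).Finite := (finite_Iio c).inter_of_right Δ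
  rw [pBasis_inter_Iio_add, hwindow, ncard_sdiff hshift (hfin.image _),
    ncard_image_of_injective _ (add_left_injective p), ncard_sdiff (by gcongr; simp) hfin]

theorem stmt_16_general (n : ℕ) (Δ : Set ℕ) (hΔ : IsSemiModule n (n + 1) Δ)
    (a : Fin n → ℕ) (ha : StrictMono a) (hrange : Set.range a = pBasis n Δ)
    (j : Fin n) :
    {i : Fin n | a i < a j + n}.ncard = n - gInt (n + 1) Δ (a j) := by
  have haj : a j ∈ Δ := (hrange ▸ mem_range_self j : a j ∈ pBasis n Δ).1
  have hcount : {i | a i < a j + n}.ncard = (Ico (a j) (a j + n) ∩ Δ).ncard := by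
    rw [← ncard_pBasis_inter_Iio_add (fun x => hΔ.add_left_mem), ← hrange,
      ← image_preimage_eq_range_inter, ncard_image_of_injective _ ha.injective]
    rfl
  have hgap : gInt (n + 1) Δ (a j) = (Ico (a j) (a j + n) \ Δ).ncard := by
    rw [gInt, ← add_assoc, ← insert_Ico_right_eq_Ico_add_one le_self_add,
      insert_sdiff_of_mem _ (hΔ.add_left_mem haj)]
  have hsplit := ncard_inter_add_ncard_sdiff_eq_ncard (Ico (a j) (a j + n)) Δ (finite_Ico _ _)
  rw [ncard_Ico_nat, add_tsub_cancel_left] at hsplit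
  omega

/-- for the `n`-basis `0 = a_0 < … < a_{n-1}` of a `Γ^{n,n+1}`-semi-module,
the number of indices `i` with `a_i < a_j + n` equals `n - g(a_j)`. -/
theorem stmt_16 (n : ℕ) (hn : 1 ≤ n) (Δ : Set ℕ) (hΔ : IsSemiModule n (n + 1) Δ)
    (a : Fin n → ℕ) (ha : StrictMono a) (hrange : Set.range a = pBasis n Δ)
    (j : Fin n) :
    {i : Fin n | a i < a j + n}.ncard = n - gInt (n + 1) Δ (a j) :=
  stmt_16_general n Δ hΔ a ha hrange j
end
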